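/- arXiv:2505.04754 — 7 statements merged into one kernel-verified Lean document; each statement's English description precedes it below -/
import Mathlib

section
/- For 0 < p_n < 1 with p_1 = 1 - p_n, the function π defined by π(0,b) = p_1^b for b < n-1, π(0,n-1) = p_1^{n-1}/p_n, π(0,n) = p_1^n/p_n, and π(1,b) = p_1^b for b < n, satisfies the balance equations: π(0,0) = π(1,0); π(0,b) = π(0,b-1)·p_1 for 0 < b < n-1; π(0,n-1) = π(0,n-2)·p_1 + π(0,n); π(0,n) = π(0,n-1)·p_1; π(1,b) = π(1,b+1) + π(0,b)·p_n for 0 ≤ b < n-1; and π(1,n-1) = π(0,n-1)·p_n. -/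
/-!
Every state other than `(0, n - 1)` and `(0, n)` carries a power of `p₁`, and `p₁ + pₙ = 1` makes the
powers split as `p₁ ^ b = p₁ ^ (b + 1) + p₁ ^ b * pₙ`; dividing by `pₙ` the same split gives the
balance equation at the boundary state `(0, n - 1)`.
-/

theorem pow_eq_pow_succ_add_pow_mul {R : Type*} [Semiring R] {p q : R} (h : p + q = 1) (b : ℕ) :
    p ^ b = p ^ (b + 1) + p ^ b * q := by
  rw [pow_succ, ← mul_add, h, mul_one]

theorem div_eq_add_mul_div {K : Type*} [Field K] {p q : K} (h : p + q = 1) (hq : q ≠ 0) (c : K) :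
    c / q = c + c * p / q := by
  field_simp
  linear_combination -c * h

theorem stmt_1_general (n : ℕ) (hn : 2 ≤ n) (pn p1 : ℝ) (hpn0 : 0 < pn)
    (hp1 : p1 = 1 - pn) (π : ℕ → ℕ → ℝ)
    (hA : ∀ b, b < n - 1 → π 0 b = p1 ^ b)
    (hB : π 0 (n - 1) = p1 ^ (n - 1) / pn)
    (hC : π 0 n = p1 ^ n / pn)
    (hD : ∀ b, b < n → π 1 b = p1 ^ b) :
    π 0 0 = π 1 0 ∧
    (∀ b, 0 < b → b < n - 1 → π 0 b = π 0 (b - 1) * p1) ∧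
    π 0 (n - 1) = π 0 (n - 2) * p1 + π 0 n ∧
    π 0 n = π 0 (n - 1) * p1 ∧
    (∀ b, b < n - 1 → π 1 b = π 1 (b + 1) + π 0 b * pn) ∧
    π 1 (n - 1) = π 0 (n - 1) * pn := by
  obtain ⟨m, rfl⟩ : ∃ m, n = m + 2 := ⟨n - 2, by omega⟩
  have hsum : p1 + pn = 1 := by rw [hp1, sub_add_cancel]
  simp only [Nat.add_sub_cancel, show m + 2 - 1 = m + 1 by omega] at hB ⊢
  refine ⟨by rw [hA 0 (by omega), hD 0 (by omega)], ?_, ?_, ?_, ?_, ?_⟩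
  · intro b hpos hb
    obtain ⟨c, rfl⟩ := Nat.exists_eq_add_one_of_ne_zero hpos.ne'
    rw [Nat.add_sub_cancel, hA (c + 1) hb, hA c (by omega), pow_succ]
  · rw [hB, hC, hA m (by omega), ← pow_succ, pow_succ p1 (m + 1)]
    exact div_eq_add_mul_div hsum hpn0.ne' _
  · rw [hB, hC, div_mul_eq_mul_div, ← pow_succ]
  · intro b hb
    rw [hD b (by omega), hD (b + 1) (by omega), hA b hb]
    exact pow_eq_pow_succ_add_pow_mul hsum b
  · rw [hD (m + 1) (by omega), hB, div_mul_cancel₀ _ hpn0.ne']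

theorem stmt_1 (n : ℕ) (hn : 2 ≤ n) (pn p1 : ℝ) (hpn0 : 0 < pn) (hpn1 : pn < 1)
    (hp1 : p1 = 1 - pn) (π : ℕ → ℕ → ℝ)
    (hA : ∀ b, b < n - 1 → π 0 b = p1 ^ b)
    (hB : π 0 (n - 1) = p1 ^ (n - 1) / pn)
    (hC : π 0 n = p1 ^ n / pn)
    (hD : ∀ b, b < n → π 1 b = p1 ^ b) :
    π 0 0 = π 1 0 ∧
    (∀ b, 0 < b → b < n - 1 → π 0 b = π 0 (b - 1) * p1) ∧
    π 0 (n - 1) = π 0 (n - 2) * p1 + π 0 n ∧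
    π 0 n = π 0 (n - 1) * p1 ∧
    (∀ b, b < n - 1 → π 1 b = π 1 (b + 1) + π 0 b * pn) ∧
    π 1 (n - 1) = π 0 (n - 1) * pn :=
  stmt_1_general n hn pn p1 hpn0 hp1 π hA hB hC hD
end

section
/- Let μ_1, μ_n > 0 be constants and let p_n → 0 with p_n = ω(1/n). Define μ(n) = (1/p_n) · (1/μ_n + (1-p_n)^n/(n μ_1 p_n) + ∑_{b=1}^{n-1} (1-p_n)^b/(b μ_1))^{-1}. Then μ(n) · p_n · ln(1/p_n) / μ_1 → 1 as n → ∞, i.e., μ = (1+o(1)) μ_1/(p_n ln(1/p_n)). -/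
/-- Throughput of the saturated 1-and-`n` multiserver-job system. -/
noncomputable def muSat (mu1 mun : ℝ) (p : ℕ → ℝ) (n : ℕ) : ℝ :=
  (1 / p n) *
    (1 / mun + (1 - p n) ^ n / ((n : ℝ) * mu1 * p n) +
      ∑ b ∈ Finset.Ico 1 n, (1 - p n) ^ b / ((b : ℝ) * mu1))⁻¹

open Filter Real Finset Topology

set_option maxHeartbeats 1000000 in
private lemma T_bounds_aux (p : ℝ) (hp0 : 0 < p) (hp1 : p < 1) (n : ℕ) (hn : 1 ≤ n) :
    Real.log (1/p) - (1-p)^n/((n:ℝ)*p) ≤ ∑ b ∈ Finset.Ico 1 n, (1-p)^b/(b:ℝ) ∧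
    ∑ b ∈ Finset.Ico 1 n, (1-p)^b/(b:ℝ) ≤ Real.log (1/p) := by
  set x := 1 - p with hxdef
  have hx0 : 0 ≤ x := by simp [hxdef]; linarith
  have hx1 : x < 1 := by simp [hxdef]; linarith
  have habs : |x| < 1 := by rw [abs_of_nonneg hx0]; exact hx1
  have hs : HasSum (fun i : ℕ => x ^ (i+1) / (i+1)) (-Real.log (1 - x)) :=
    Real.hasSum_pow_div_log_of_abs_lt_one habs
  have hsum := hs.summable
  have key := Summable.sum_add_tsum_nat_add (n-1) hsum
  rw [hs.tsum_eq] at key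
  have hlog : -Real.log (1 - x) = Real.log (1/p) := by
    rw [hxdef]; rw [show (1:ℝ) - (1-p) = p by ring, one_div, Real.log_inv]
  have hT : ∑ b ∈ Finset.Ico 1 n, x^b/(b:ℝ)
      = ∑ i ∈ Finset.range (n-1), x^(i+1)/((i:ℝ)+1) := by
    rw [Finset.sum_Ico_eq_sum_range]
    refine Finset.sum_congr rfl fun i _ => ?_
    push_cast
    ring_nf
  set tail := ∑' i : ℕ, x ^ (i + (n-1) + 1) / ((i + (n-1) : ℕ) + 1 : ℝ) with htaildef
  have hkey : ∑ b ∈ Finset.Ico 1 n, x^b/(b:ℝ) + tail = Real.log (1/p) := by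
    rw [hT, ← hlog, ← key]
  have htail0 : 0 ≤ tail := tsum_nonneg fun i => by positivity
  have hp' : 0 < (1:ℝ) - x := by simp [hxdef]; linarith
  have htailsum : Summable (fun i : ℕ => x ^ (i + (n-1) + 1) / ((i + (n-1) : ℕ) + 1 : ℝ)) :=
    (summable_nat_add_iff (n-1)).2 hsum
  have hgeo : Summable (fun i : ℕ => x^n/(n:ℝ) * x^i) :=
    (summable_geometric_of_lt_one hx0 hx1).mul_left _
  have htail_le : tail ≤ x^n/((n:ℝ)*p) := by
    have hle : tail ≤ ∑' i : ℕ, x^n/(n:ℝ) * x^i := by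
      refine Summable.tsum_le_tsum (fun i => ?_) htailsum hgeo
      have hexp : i + (n-1) + 1 = n + i := by omega
      rw [hexp]
      have hden : ((i + (n-1) : ℕ) + 1 : ℝ) = ((n + i : ℕ) : ℝ) := by
        push_cast [Nat.cast_sub hn]; ring
      rw [hden]
      have h1 : x ^ (n+i) / ((n+i:ℕ):ℝ) ≤ x ^ (n+i) / (n:ℝ) := by
        apply div_le_div_of_nonneg_left (by positivity) (by exact_mod_cast hn) (by exact_mod_cast Nat.le_add_right n i)
      calc x ^ (n+i) / ((n+i:ℕ):ℝ) ≤ x ^ (n+i) / (n:ℝ) := h1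
        _ = x^n/(n:ℝ) * x^i := by rw [pow_add]; ring
    rw [tsum_mul_left, tsum_geometric_of_lt_one hx0 hx1] at hle
    calc tail ≤ x^n/(n:ℝ) * (1-x)⁻¹ := hle
      _ = x^n/((n:ℝ)*p) := by rw [hxdef]; rw [show (1:ℝ)-(1-p) = p by ring]; field_simp
  constructor <;> linarith

set_option maxHeartbeats 1000000 in
theorem stmt_6 (mu1 mun : ℝ) (hmu1 : 0 < mu1) (hmun : 0 < mun)
    (p : ℕ → ℝ) (hmem : ∀ n, 0 < p n ∧ p n < 1)
    (hto0 : Filter.Tendsto p Filter.atTop (nhds 0))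
    (hnp : Filter.Tendsto (fun n : ℕ => (n : ℝ) * p n) Filter.atTop Filter.atTop) :
    Filter.Tendsto (fun n : ℕ => muSat mu1 mun p n * p n * Real.log (1 / p n) / mu1)
      Filter.atTop (nhds 1) := by
  set L : ℕ → ℝ := fun n => Real.log (1 / p n) with hLdef
  set D : ℕ → ℝ := fun n => 1 / mun + (1 - p n) ^ n / ((n : ℝ) * mu1 * p n) +
      ∑ b ∈ Finset.Ico 1 n, (1 - p n) ^ b / ((b : ℝ) * mu1) with hDdef
  set g : ℕ → ℝ := fun n => mu1 * D n / L n with hgdef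
  have hp0 : ∀ n, 0 < p n := fun n => (hmem n).1
  have hp1 : ∀ n, p n < 1 := fun n => (hmem n).2
  have hL : ∀ n, 0 < L n := fun n => Real.log_pos (one_lt_one_div (hp0 n) (hp1 n))
  have hD : ∀ n, 0 < D n := by
    intro n
    have h1 : 0 < 1 / mun := one_div_pos.mpr hmun
    have h2 : 0 ≤ (1 - p n) ^ n / ((n : ℝ) * mu1 * p n) := by
      apply div_nonneg (pow_nonneg (by linarith [hp1 n]) _)
      have := (hp0 n).le
      positivity
    have h3 : 0 ≤ ∑ b ∈ Finset.Ico 1 n, (1 - p n) ^ b / ((b : ℝ) * mu1) := by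
      refine Finset.sum_nonneg fun b _ => ?_
      apply div_nonneg (pow_nonneg (by linarith [hp1 n]) _)
      positivity
    simp only [hDdef]
    linarith
  -- L → ∞
  have hp0' : Tendsto p atTop (𝓝[>] 0) :=
    tendsto_nhdsWithin_of_tendsto_nhds_of_eventually_within _ hto0
      (Filter.Eventually.of_forall fun n => hp0 n)
  have h1p : Tendsto (fun n => 1 / p n) atTop atTop := by
    simpa [one_div] using (show Tendsto (fun n => (p n)⁻¹) atTop atTop from hp0'.inv_tendsto_nhdsGT_zero)
  have hLtop : Tendsto L atTop atTop := Real.tendsto_log_atTop.comp h1p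
  have hInv : Tendsto (fun n : ℕ => ((n:ℝ) * p n)⁻¹) atTop (nhds 0) := hnp.inv_tendsto_atTop
  have hEv : ∀ᶠ n : ℕ in atTop, 1 ≤ n ∧ 1 ≤ L n ∧ 0 < (n:ℝ) * p n := by
    filter_upwards [eventually_ge_atTop 1, hLtop.eventually_ge_atTop 1,
      hnp.eventually_gt_atTop 0] with n h1 h2 h3
    exact ⟨h1, h2, h3⟩
  -- pieces
  set A : ℕ → ℝ := fun n => mu1 / (mun * L n) with hAdef
  set B : ℕ → ℝ := fun n => (1 - p n) ^ n / ((n:ℝ) * p n * L n) with hBdef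
  set C : ℕ → ℝ := fun n => (∑ b ∈ Finset.Ico 1 n, (1 - p n) ^ b / (b:ℝ)) / L n with hCdef
  have hgABC : ∀ n, g n = A n + B n + C n := by
    intro n
    have hm1 := hmu1.ne'
    have hsum : mu1 * ∑ b ∈ Finset.Ico 1 n, (1 - p n) ^ b / ((b : ℝ) * mu1)
        = ∑ b ∈ Finset.Ico 1 n, (1 - p n) ^ b / (b:ℝ) := by
      rw [Finset.mul_sum]
      refine Finset.sum_congr rfl fun b hb => ?_
      have hb0 : (b:ℝ) ≠ 0 := Nat.cast_ne_zero.2 (by have := Finset.mem_Ico.1 hb; omega)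
      field_simp
    have hmid : mu1 * ((1 - p n) ^ n / ((n : ℝ) * mu1 * p n))
        = (1 - p n) ^ n / ((n:ℝ) * p n) := by
      rw [show (n : ℝ) * mu1 * p n = mu1 * ((n:ℝ) * p n) by ring, ← div_div,
        ← mul_div_assoc, mul_comm mu1 ((1 - p n) ^ n / mu1), div_mul_cancel₀ _ hm1]
    simp only [hgdef, hDdef, hAdef, hBdef, hCdef]
    rw [mul_add, mul_add, add_div, add_div, hsum, hmid]
    congr 1
    congr 1
    · rw [mul_one_div, div_div]
    · rw [div_div]
  have hA : Tendsto A atTop (nhds 0) := by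
    have h : Tendsto (fun n => (mu1/mun) / L n) atTop (nhds 0) :=
      Tendsto.div_atTop tendsto_const_nhds hLtop
    refine h.congr fun n => ?_
    rw [div_div]
  have hB : Tendsto B atTop (nhds 0) := by
    apply squeeze_zero' (g := fun n : ℕ => ((n:ℝ) * p n)⁻¹) _ _ hInv
    · filter_upwards [hEv] with n ⟨h1, h2, h3⟩
      have h4 := (hp1 n)
      have h5 := (hp0 n)
      simp only [hBdef]
      exact div_nonneg (pow_nonneg (by linarith) _) (mul_nonneg h3.le (hL n).le)
    · filter_upwards [hEv] with n ⟨h1, h2, h3⟩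
      simp only [hBdef]
      have hx1 : (1 - p n) ^ n ≤ 1 :=
        pow_le_one₀ (by linarith [hp1 n]) (by linarith [hp0 n])
      rw [← one_div ((n:ℝ) * p n)]
      have hpos : 0 < (n:ℝ) * p n * L n := mul_pos h3 (by linarith)
      calc (1 - p n) ^ n / ((n:ℝ) * p n * L n) ≤ 1 / ((n:ℝ) * p n * L n) :=
            (div_le_div_iff_of_pos_right hpos).mpr hx1
        _ ≤ 1 / ((n:ℝ) * p n) :=
            one_div_le_one_div_of_le h3 (le_mul_of_one_le_right h3.le h2)
  have hC : Tendsto C atTop (nhds 1) := by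
    apply tendsto_of_tendsto_of_tendsto_of_le_of_le'
      (g := fun n : ℕ => 1 - ((n:ℝ) * p n)⁻¹) (h := fun _ : ℕ => (1:ℝ))
    · simpa using tendsto_const_nhds.sub hInv
    · exact tendsto_const_nhds
    · filter_upwards [hEv] with n ⟨h1, h2, h3⟩
      have hb := (T_bounds_aux (p n) (hp0 n) (hp1 n) n h1).1
      have hx1 : (1 - p n) ^ n ≤ 1 :=
        pow_le_one₀ (by linarith [hp1 n]) (by linarith [hp0 n])
      have hxb : (1 - p n) ^ n / ((n:ℝ) * p n) ≤ ((n:ℝ) * p n)⁻¹ := by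
        rw [← one_div ((n:ℝ) * p n)]
        exact (div_le_div_iff_of_pos_right h3).mpr hx1
      have hinv0 : 0 ≤ ((n:ℝ) * p n)⁻¹ := inv_nonneg.mpr h3.le
      simp only [hCdef]
      rw [le_div_iff₀ (hL n)]
      nlinarith [mul_nonneg hinv0 (by linarith : (0:ℝ) ≤ L n - 1)]
    · filter_upwards [hEv] with n ⟨h1, h2, h3⟩
      have hb := (T_bounds_aux (p n) (hp0 n) (hp1 n) n h1).2
      simp only [hCdef]
      rw [div_le_one (hL n)]
      exact hb
  have hg : Tendsto g atTop (nhds 1) := by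
    have h := (hA.add hB).add hC
    rw [zero_add, zero_add] at h
    exact Tendsto.congr (fun n => (hgABC n).symm) h
  have hfinal : ∀ n, muSat mu1 mun p n * p n * L n / mu1 = (g n)⁻¹ := by
    intro n
    have hpn := (hp0 n).ne'
    have hln := (hL n).ne'
    have hdn := (hD n).ne'
    have hm1 := hmu1.ne'
    have h1 : muSat mu1 mun p n = (1 / p n) * (D n)⁻¹ := rfl
    rw [h1, hgdef]
    field_simp
  have := hg.inv₀ one_ne_zero
  rw [inv_one] at this
  exact Tendsto.congr (fun n => (hfinal n).symm) this
end

section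
/- Let μ_1, μ_n > 0 be constants, c > 0, and p_n = c/n. Define μ(n) = (1/p_n) · (1/μ_n + (1-p_n)^n/(n μ_1 p_n) + ∑_{b=1}^{n-1} (1-p_n)^b/(b μ_1))^{-1}. Then μ(n) · p_n · ln(1/p_n) / μ_1 → 1 as n → ∞, i.e., μ = (1+o(1)) μ_1/(p_n ln(1/p_n)). -/
open Filter Finset Real

/-- Inner expression of `muSat` with `p n = c / n`. -/
noncomputable def Sfun (mu1 mun c : ℝ) (n : ℕ) : ℝ :=
  1 / mun + (1 - c / n) ^ n / ((n : ℝ) * mu1 * (c / n)) +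
    ∑ b ∈ Finset.Ico 1 n, (1 - c / n) ^ b / ((b : ℝ) * mu1)

lemma log_sub_partial (c : ℝ) (hc : 0 < c) (n : ℕ) (hn : c < n) :
    0 ≤ Real.log ((n : ℝ) / c) - ∑ b ∈ Finset.Ico 1 n, (1 - c / n) ^ b / (b : ℝ) ∧
    Real.log ((n : ℝ) / c) - ∑ b ∈ Finset.Ico 1 n, (1 - c / n) ^ b / (b : ℝ) ≤ 1 / c := by
  have hn0 : (0 : ℝ) < n := lt_trans hc hn
  set x : ℝ := 1 - c / n with hxdef
  have hcn1 : c / n < 1 := (div_lt_one hn0).mpr hn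
  have hcn0 : 0 < c / n := div_pos hc hn0
  have hx0 : 0 ≤ x := by rw [hxdef]; linarith
  have hx1 : x < 1 := by rw [hxdef]; linarith
  have habs : |x| < 1 := by rw [abs_of_nonneg hx0]; exact hx1
  have hsum : HasSum (fun k : ℕ => x ^ (k + 1) / (k + 1)) (Real.log ((n : ℝ) / c)) := by
    have h := Real.hasSum_pow_div_log_of_abs_lt_one habs
    have h1x : 1 - x = c / n := by rw [hxdef]; ring
    rwa [h1x, ← Real.log_inv, inv_div] at h
  set f : ℕ → ℝ := fun k => x ^ (k + 1) / (k + 1) with hf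
  have hfnn : ∀ k, 0 ≤ f k := fun k => by
    apply div_nonneg (pow_nonneg hx0 _); positivity
  obtain ⟨m, rfl⟩ : ∃ m, n = m + 1 := by
    refine ⟨n - 1, ?_⟩
    have : n ≠ 0 := by rintro rfl; exact absurd hn0 (by norm_num)
    omega
  have hpartial : ∑ b ∈ Finset.Ico 1 (m + 1), x ^ b / (b : ℝ) = ∑ k ∈ range m, f k := by
    rw [Finset.sum_Ico_eq_sum_range]
    simp only [Nat.add_sub_cancel]
    refine Finset.sum_congr rfl fun i _ => ?_
    simp [hf, add_comm 1 i]
  have htail : ∑ k ∈ range m, f k + ∑' k, f (k + m) = Real.log (((m + 1 : ℕ) : ℝ) / c) :=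
    (hsum.summable.sum_add_tsum_nat_add m).trans hsum.tsum_eq
  have hshift : Summable fun k => f (k + m) := (summable_nat_add_iff m).2 hsum.summable
  have hgeo : Summable fun k : ℕ => x ^ (m + 1) / (m + 1) * x ^ k :=
    (summable_geometric_of_lt_one hx0 hx1).mul_left _
  have htail_le : ∑' k, f (k + m) ≤ x ^ (m + 1) / (m + 1) * (1 - x)⁻¹ := by
    have hle : ∀ k : ℕ, f (k + m) ≤ x ^ (m + 1) / (m + 1) * x ^ k := by
      intro k
      have h1 : x ^ (k + m + 1) = x ^ (m + 1) * x ^ k := by ring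
      have h2 : (0 : ℝ) < (m : ℝ) + 1 := by positivity
      have h3 : ((m : ℝ) + 1) ≤ ((k + m : ℕ) : ℝ) + 1 := by
        push_cast
        have hk : (0:ℝ) ≤ (k:ℝ) := Nat.cast_nonneg k
        linarith
      calc f (k + m) = x ^ (k + m + 1) / (((k + m : ℕ) : ℝ) + 1) := by simp [hf]
        _ ≤ x ^ (k + m + 1) / ((m : ℝ) + 1) :=
            div_le_div_of_nonneg_left (pow_nonneg hx0 _) h2 h3
        _ = x ^ (m + 1) / ((m : ℝ) + 1) * x ^ k := by rw [h1]; ring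
    calc ∑' k, f (k + m) ≤ ∑' k : ℕ, x ^ (m + 1) / (m + 1) * x ^ k :=
          Summable.tsum_le_tsum hle hshift hgeo
      _ = x ^ (m + 1) / (m + 1) * ∑' k : ℕ, x ^ k := tsum_mul_left
      _ = x ^ (m + 1) / (m + 1) * (1 - x)⁻¹ := by rw [tsum_geometric_of_lt_one hx0 hx1]
  have hbound : x ^ (m + 1) / (m + 1) * (1 - x)⁻¹ ≤ 1 / c := by
    have h1x : 1 - x = c / (((m : ℕ) : ℝ) + 1) := by
      rw [hxdef]; push_cast; ring
    have hm1 : (0 : ℝ) < (m : ℝ) + 1 := by positivity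
    have hxpow : x ^ (m + 1) ≤ 1 := pow_le_one₀ hx0 hx1.le
    rw [h1x, inv_div]
    have heq : x ^ (m + 1) / (((m : ℕ) : ℝ) + 1) * ((((m : ℕ) : ℝ) + 1) / c)
        = x ^ (m + 1) / c := by field_simp
    rw [heq]
    exact div_le_div_of_nonneg_right hxpow hc.le |>.trans_eq rfl
  have htail_nn : 0 ≤ ∑' k, f (k + m) := tsum_nonneg fun k => hfnn _
  constructor
  · rw [hpartial]; push_cast at htail ⊢; linarith
  · rw [hpartial]; push_cast at htail ⊢; linarith [htail_le.trans hbound]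

lemma mulS_eq (mu1 mun c : ℝ) (hmu1 : 0 < mu1) (hc : 0 < c) (n : ℕ) (hn : c < n) :
    mu1 * Sfun mu1 mun c n = mu1 / mun + (1 - c / n) ^ n / c +
      ∑ b ∈ Finset.Ico 1 n, (1 - c / n) ^ b / (b : ℝ) := by
  have hn0 : (0 : ℝ) < n := lt_trans hc hn
  rw [Sfun, mul_add, mul_add, Finset.mul_sum]
  congr 1
  · congr 1
    · rw [mul_one_div]
    · have hden : (n : ℝ) * mu1 * (c / n) = mu1 * c := by field_simp
      rw [hden]
      field_simp
  · refine Finset.sum_congr rfl fun b hb => ?_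
    have hb1 : 1 ≤ b := (Finset.mem_Ico.mp hb).1
    have hb0 : (0 : ℝ) < b := by exact_mod_cast hb1
    field_simp

lemma Sfun_bound (mu1 mun c : ℝ) (hmu1 : 0 < mu1) (hmun : 0 < mun) (hc : 0 < c)
    (n : ℕ) (hn : c < n) :
    |mu1 * Sfun mu1 mun c n - Real.log ((n : ℝ) / c)| ≤ mu1 / mun + 1 / c + 1 / c := by
  have hn0 : (0 : ℝ) < n := lt_trans hc hn
  have hx0 : (0 : ℝ) ≤ 1 - c / n := by
    have : c / n < 1 := (div_lt_one hn0).mpr hn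
    linarith
  have hx1 : 1 - c / n ≤ 1 := by
    have : 0 < c / n := div_pos hc hn0
    linarith
  obtain ⟨h1, h2⟩ := log_sub_partial c hc n hn
  rw [mulS_eq mu1 mun c hmu1 hc n hn]
  have hpow0 : (0 : ℝ) ≤ (1 - c / n) ^ n / c := by positivity
  have hpow1 : (1 - c / n) ^ n / c ≤ 1 / c :=
    div_le_div_of_nonneg_right (pow_le_one₀ hx0 hx1) hc.le |>.trans_eq rfl
  have hmm : 0 < mu1 / mun := by positivity
  rw [abs_le]
  constructor <;> linarith

lemma expr_eq (mu1 mun c : ℝ) (hmu1 : 0 < mu1) (hc : 0 < c)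
    (p : ℕ → ℝ) (hp : ∀ n, p n = c / n) (n : ℕ) (hn : c < n) :
    muSat mu1 mun p n * p n * Real.log (1 / p n) / mu1
      = Real.log ((n : ℝ) / c) / (mu1 * Sfun mu1 mun c n) := by
  have hn0 : (0 : ℝ) < n := lt_trans hc hn
  rw [muSat, hp n, one_div (c / (n : ℝ)), inv_div]
  rw [show (1 / mun + (1 - c / ↑n) ^ n / ((n : ℝ) * mu1 * (c / ↑n)) +
      ∑ b ∈ Finset.Ico 1 n, (1 - c / ↑n) ^ b / ((b : ℝ) * mu1)) = Sfun mu1 mun c n from rfl]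
  set T := Sfun mu1 mun c n with hT
  by_cases hT0 : T = 0
  · simp [hT0]
  · field_simp

theorem stmt_7 (mu1 mun c : ℝ) (hmu1 : 0 < mu1) (hmun : 0 < mun) (hc : 0 < c)
    (p : ℕ → ℝ) (hp : ∀ n, p n = c / n) :
    Filter.Tendsto (fun n : ℕ => muSat mu1 mun p n * p n * Real.log (1 / p n) / mu1)
      Filter.atTop (nhds 1) := by
  set L : ℕ → ℝ := fun n => Real.log ((n : ℝ) / c) with hL
  have hLtop : Tendsto L atTop atTop :=
    Real.tendsto_log_atTop.comp (tendsto_natCast_atTop_atTop.atTop_div_const hc)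
  have hev : ∀ᶠ n : ℕ in atTop, c < (n : ℝ) := tendsto_natCast_atTop_atTop.eventually_gt_atTop c
  set K : ℝ := mu1 / mun + 1 / c + 1 / c with hK
  have hDL : Tendsto (fun n => (mu1 * Sfun mu1 mun c n - L n) / L n) atTop (nhds 0) := by
    apply squeeze_zero_norm' _ (Filter.Tendsto.div_atTop
      (tendsto_const_nhds (x := K)) hLtop)
    filter_upwards [hev, hLtop.eventually_gt_atTop 0] with n hb hL0
    rw [Real.norm_eq_abs, abs_div, abs_of_pos hL0]
    exact div_le_div_of_nonneg_right (Sfun_bound mu1 mun c hmu1 hmun hc n hb) hL0.le |>.trans_eq rfl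
  have hratio : Tendsto (fun n => mu1 * Sfun mu1 mun c n / L n) atTop (nhds 1) := by
    have h := hDL.add (tendsto_const_nhds (x := (1 : ℝ)))
    rw [zero_add] at h
    apply h.congr'
    filter_upwards [hLtop.eventually_gt_atTop 0] with n hL0
    field_simp
    ring
  have hinv : Tendsto (fun n => (mu1 * Sfun mu1 mun c n / L n)⁻¹) atTop (nhds 1) := by
    have h := hratio.inv₀ one_ne_zero
    simpa using h
  apply hinv.congr'
  filter_upwards [hev] with n hn
  rw [inv_div]
  exact (expr_eq mu1 mun c hmu1 hc p hp n hn).symm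
end

section
/- Let μ_1, μ_n > 0 be constants and let p_n be a sequence in (0,1) with p_n = o(1/(n ln n)). Define μ(n) = (1/p_n) · (1/μ_n + (1-p_n)^n/(n μ_1 p_n) + ∑_{b=1}^{n-1} (1-p_n)^b/(b μ_1))^{-1}. Then μ(n)/(n μ_1) → 1 as n → ∞. -/
open Filter Finset Real

lemma harmonic_Ico (n : ℕ) :
    ∑ b ∈ Finset.Ico 1 n, ((b : ℝ))⁻¹ = (harmonic (n - 1) : ℝ) := by
  rw [Finset.sum_Ico_eq_sum_range, harmonic]
  push_cast
  exact Finset.sum_congr rfl fun i _ => by rw [add_comm]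

theorem stmt_8 (mu1 mun : ℝ) (hmu1 : 0 < mu1) (hmun : 0 < mun)
    (p : ℕ → ℝ) (hmem : ∀ n, 0 < p n ∧ p n < 1)
    (hsmall : Filter.Tendsto (fun n : ℕ => p n * ((n : ℝ) * Real.log n))
      Filter.atTop (nhds 0)) :
    Filter.Tendsto (fun n : ℕ => muSat mu1 mun p n / ((n : ℝ) * mu1))
      Filter.atTop (nhds 1) := by
  -- n p_n → 0
  have hnp : Tendsto (fun n : ℕ => p n * n) atTop (nhds 0) := by
    apply tendsto_of_tendsto_of_tendsto_of_le_of_le' tendsto_const_nhds hsmall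
    · refine Eventually.of_forall fun n => ?_
      have := (hmem n).1.le
      positivity
    · filter_upwards [eventually_ge_atTop 3] with n hn
      have h3 : (3:ℝ) ≤ (n:ℝ) := by exact_mod_cast hn
      have hlog : (1:ℝ) ≤ Real.log n := by
        rw [Real.le_log_iff_exp_le (by linarith)]
        have := Real.exp_one_lt_d9
        linarith
      have : (n:ℝ) ≤ (n:ℝ) * Real.log n :=
        le_mul_of_one_le_right (by positivity) hlog
      exact mul_le_mul_of_nonneg_left this (hmem n).1.le
  set S : ℕ → ℝ := fun n => ∑ b ∈ Finset.Ico 1 n, (1 - p n) ^ b / (b : ℝ) with hS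
  set g : ℕ → ℝ := fun n =>
    (n : ℝ) * mu1 * p n / mun + (1 - p n) ^ n + (n : ℝ) * p n * S n with hg
  -- first term → 0
  have ht1 : Tendsto (fun n : ℕ => (n : ℝ) * mu1 * p n / mun) atTop (nhds 0) := by
    have := hnp.mul_const (mu1 / mun)
    rw [zero_mul] at this
    convert this using 2 with n
    ring
  -- second term → 1
  have ht2 : Tendsto (fun n : ℕ => (1 - p n) ^ n) atTop (nhds 1) := by
    have hlow : Tendsto (fun n : ℕ => 1 - p n * n) atTop (nhds 1) := by
      have h1 : Tendsto (fun _ : ℕ => (1:ℝ)) atTop (nhds 1) := tendsto_const_nhds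
      simpa using h1.sub hnp
    apply tendsto_of_tendsto_of_tendsto_of_le_of_le' hlow tendsto_const_nhds
    · refine Eventually.of_forall fun n => ?_
      have h2 : (-2:ℝ) ≤ -p n := by linarith [(hmem n).2]
      have := one_add_mul_le_pow h2 n
      have e : (1:ℝ) + -p n = 1 - p n := by ring
      rw [e] at this
      calc 1 - p n * n = 1 + (n:ℝ) * -p n := by ring
        _ ≤ (1 - p n) ^ n := this
    · refine Eventually.of_forall fun n => ?_
      exact pow_le_one₀ (by linarith [(hmem n).2]) (by linarith [(hmem n).1])
  -- third term → 0
  have ht3 : Tendsto (fun n : ℕ => (n : ℝ) * p n * S n) atTop (nhds 0) := by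
    have hrhs : Tendsto (fun n : ℕ => p n * n + p n * ((n:ℝ) * Real.log n))
        atTop (nhds 0) := by simpa using hnp.add hsmall
    apply tendsto_of_tendsto_of_tendsto_of_le_of_le' tendsto_const_nhds hrhs
    · refine Eventually.of_forall fun n => ?_
      have hSnn : 0 ≤ S n := by
        apply Finset.sum_nonneg
        intro b hb
        have hb1 : 1 ≤ b := (Finset.mem_Ico.1 hb).1
        have hbp : (0:ℝ) < b := by exact_mod_cast hb1
        have hq : (0:ℝ) ≤ 1 - p n := by linarith [(hmem n).2]
        positivity
      have := (hmem n).1.le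
      positivity
    · filter_upwards [eventually_ge_atTop 3] with n hn
      have hn3 : (3:ℝ) ≤ (n:ℝ) := by exact_mod_cast hn
      have hSle : S n ≤ 1 + Real.log n := by
        have h1 : S n ≤ ∑ b ∈ Finset.Ico 1 n, ((b : ℝ))⁻¹ := by
          apply Finset.sum_le_sum
          intro b hb
          have hb1 : 1 ≤ b := (Finset.mem_Ico.1 hb).1
          have hbpos : (0:ℝ) < b := by exact_mod_cast hb1
          rw [div_eq_mul_inv]
          have hpow : (1 - p n) ^ b ≤ 1 :=
            pow_le_one₀ (by linarith [(hmem n).2]) (by linarith [(hmem n).1])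
          nlinarith [inv_pos.2 hbpos]
        rw [harmonic_Ico] at h1
        have h2 : (harmonic (n - 1) : ℝ) ≤ 1 + Real.log (n - 1 : ℕ) :=
          harmonic_le_one_add_log _
        have h3 : Real.log ((n - 1 : ℕ) : ℝ) ≤ Real.log n := by
          apply Real.log_le_log (by
            have : 2 ≤ n - 1 := by omega
            exact_mod_cast Nat.lt_of_lt_of_le Nat.zero_lt_two this)
          exact_mod_cast Nat.sub_le n 1
        linarith
      have hp := (hmem n).1
      calc (n:ℝ) * p n * S n ≤ (n:ℝ) * p n * (1 + Real.log n) := by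
            apply mul_le_mul_of_nonneg_left hSle (by positivity)
        _ = p n * n + p n * ((n:ℝ) * Real.log n) := by ring
  have hgl : Tendsto g atTop (nhds 1) := by
    have := (ht1.add ht2).add ht3
    simpa using this
  have hginv : Tendsto (fun n => (g n)⁻¹) atTop (nhds 1) := by
    simpa using hgl.inv₀ one_ne_zero
  apply hginv.congr'
  filter_upwards [eventually_ge_atTop 1] with n hn
  have hp := (hmem n).1
  have hnpos : (0:ℝ) < n := by exact_mod_cast hn
  have hSnn : 0 ≤ ∑ b ∈ Finset.Ico 1 n, (1 - p n) ^ b / ((b : ℝ) * mu1) := by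
    apply Finset.sum_nonneg
    intro b hb
    have hb1 : 1 ≤ b := (Finset.mem_Ico.1 hb).1
    have hbp : (0:ℝ) < b := by exact_mod_cast hb1
    have hq : (0:ℝ) ≤ 1 - p n := by linarith [(hmem n).2]
    positivity
  set D : ℝ := 1 / mun + (1 - p n) ^ n / ((n : ℝ) * mu1 * p n) +
      ∑ b ∈ Finset.Ico 1 n, (1 - p n) ^ b / ((b : ℝ) * mu1) with hD
  have hDpos : 0 < D := by
    have h1 : 0 < 1 / mun := by positivity
    have hq : (0:ℝ) < 1 - p n := by linarith [(hmem n).2]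
    have h2 : 0 < (1 - p n) ^ n / ((n : ℝ) * mu1 * p n) :=
      div_pos (pow_pos hq n) (by positivity)
    rw [hD]
    linarith [hSnn]
  have hsum : ∑ b ∈ Finset.Ico 1 n, (1 - p n) ^ b / ((b : ℝ) * mu1)
      = S n / mu1 := by
    rw [hS, Finset.sum_div]
    exact Finset.sum_congr rfl fun b _ => (div_div _ _ _).symm
  have hgD : g n = (n : ℝ) * mu1 * p n * D := by
    rw [hD, hsum, hg]
    field_simp
  rw [hgD, muSat, ← hD]
  rw [mul_inv, mul_inv]
  field_simp
end

section
/- Let μ_1, μ_n > 0 be constants and let p_n be a sequence in (0,1) with n p_n ln n → ∞ and n p_n → 0. Define μ(n) = (1/p_n) · (1/μ_n + (1-p_n)^n/(n μ_1 p_n) + ∑_{b=1}^{n-1} (1-p_n)^b/(b μ_1))^{-1}. Then μ(n) · p_n · ln(n)/μ_1 → 1 as n → ∞, i.e., μ = (1+o(1)) μ_1/(p_n ln n). -/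
open Filter Real

lemma harm_eq (n : ℕ) :
    ∑ b ∈ Finset.Ico 1 n, ((b : ℝ))⁻¹ = ((harmonic (n - 1) : ℚ) : ℝ) := by
  rw [Finset.sum_Ico_eq_sum_range, harmonic]
  push_cast
  exact Finset.sum_congr rfl fun i _ => by rw [add_comm]

theorem stmt_9 (mu1 mun : ℝ) (hmu1 : 0 < mu1) (hmun : 0 < mun)
    (p : ℕ → ℝ) (hmem : ∀ n, 0 < p n ∧ p n < 1)
    (hbig : Filter.Tendsto (fun n : ℕ => (n : ℝ) * p n * Real.log n)
      Filter.atTop Filter.atTop)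
    (hsmall : Filter.Tendsto (fun n : ℕ => (n : ℝ) * p n) Filter.atTop (nhds 0)) :
    Filter.Tendsto (fun n : ℕ => muSat mu1 mun p n * p n * Real.log n / mu1)
      Filter.atTop (nhds 1) := by
  set D : ℕ → ℝ := fun n => 1 / mun + (1 - p n) ^ n / ((n : ℝ) * mu1 * p n) +
      ∑ b ∈ Finset.Ico 1 n, (1 - p n) ^ b / ((b : ℝ) * mu1) with hD
  have hp : ∀ n, 0 < p n := fun n => (hmem n).1
  have hp1 : ∀ n, 0 < 1 - p n := fun n => by linarith [(hmem n).2]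
  -- positivity of D
  have hDpos : ∀ n : ℕ, 0 < D n := by
    intro n
    have h1 : 0 ≤ (1 - p n) ^ n / ((n : ℝ) * mu1 * p n) :=
      div_nonneg (pow_nonneg (hp1 n).le _)
        (by have := hp n; have : (0:ℝ) ≤ n := Nat.cast_nonneg n; positivity)
    have h2 : 0 ≤ ∑ b ∈ Finset.Ico 1 n, (1 - p n) ^ b / ((b : ℝ) * mu1) :=
      Finset.sum_nonneg fun b _ => div_nonneg (pow_nonneg (hp1 n).le _)
        (by positivity)
    have h3 : 0 < 1 / mun := by positivity
    simp only [hD]; linarith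
  have hlogtop : Tendsto (fun n : ℕ => Real.log n) atTop atTop :=
    Real.tendsto_log_atTop.comp tendsto_natCast_atTop_atTop
  -- (1-p n)^n → 1
  have h1pn : Tendsto (fun n : ℕ => (1 - p n) ^ n) atTop (nhds 1) := by
    have hlow : Tendsto (fun n : ℕ => 1 - (n : ℝ) * p n) atTop (nhds 1) := by
      simpa using tendsto_const_nhds.sub hsmall
    refine tendsto_of_tendsto_of_tendsto_of_le_of_le hlow tendsto_const_nhds
      (fun n => ?_) (fun n => ?_)
    · have := one_add_mul_le_pow (a := -p n) (by have := (hmem n).2; linarith) n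
      simpa [sub_eq_add_neg, mul_comm] using this
    · exact pow_le_one₀ (hp1 n).le (by linarith [hp n])
  -- main limit : D n * mu1 / log n → 1
  have main : Tendsto (fun n : ℕ => D n * mu1 / Real.log n) atTop (nhds 1) := by
    have hupper : Tendsto
        (fun n : ℕ => (mu1 / mun) / Real.log n + 1 / ((n:ℝ) * p n * Real.log n)
          + 1 / Real.log n + 1) atTop (nhds 1) := by
      have t1 : Tendsto (fun n : ℕ => (mu1 / mun) / Real.log n) atTop (nhds 0) :=
        Tendsto.div_atTop tendsto_const_nhds hlogtop
      have t2 : Tendsto (fun n : ℕ => 1 / ((n:ℝ) * p n * Real.log n)) atTop (nhds 0) :=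
        hbig.inv_tendsto_atTop.congr fun n => (one_div _).symm
      have t3 : Tendsto (fun n : ℕ => (1:ℝ) / Real.log n) atTop (nhds 0) :=
        Tendsto.div_atTop tendsto_const_nhds hlogtop
      have := ((t1.add t2).add t3).add_const (1:ℝ)
      simpa using this
    refine tendsto_of_tendsto_of_tendsto_of_le_of_le' h1pn hupper ?_ ?_
    · -- lower bound, for n ≥ 2
      filter_upwards [eventually_ge_atTop 2] with n hn
      have hlog : 0 < Real.log n := Real.log_pos (by exact_mod_cast hn)
      rw [le_div_iff₀ hlog]
      have hHn : Real.log n ≤ ((harmonic (n-1) : ℚ) : ℝ) := by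
        have := log_add_one_le_harmonic (n - 1)
        rwa [Nat.sub_add_cancel (by omega)] at this
      calc (1 - p n) ^ n * Real.log n
          ≤ (1 - p n) ^ n * ((harmonic (n-1) : ℚ) : ℝ) := by
            exact mul_le_mul_of_nonneg_left hHn (pow_nonneg (hp1 n).le _)
        _ = ∑ b ∈ Finset.Ico 1 n, (1 - p n) ^ n * ((b : ℝ))⁻¹ := by
            rw [← harm_eq, Finset.mul_sum]
        _ ≤ ∑ b ∈ Finset.Ico 1 n, (1 - p n) ^ b * ((b : ℝ))⁻¹ := by
            refine Finset.sum_le_sum fun b hb => ?_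
            have hb' := Finset.mem_Ico.mp hb
            refine mul_le_mul_of_nonneg_right ?_ (by positivity)
            exact pow_le_pow_of_le_one (hp1 n).le (by linarith [hp n]) hb'.2.le
        _ = (∑ b ∈ Finset.Ico 1 n, (1 - p n) ^ b / ((b : ℝ) * mu1)) * mu1 := by
            rw [Finset.sum_mul]
            refine Finset.sum_congr rfl fun b hb => ?_
            have hb' := Finset.mem_Ico.mp hb
            have hb0 : (0:ℝ) < b := by exact_mod_cast hb'.1
            have hbne : ((b:ℝ)) ≠ 0 := hb0.ne'
            field_simp
        _ ≤ D n * mu1 := by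
            refine mul_le_mul_of_nonneg_right ?_ hmu1.le
            have h1 : 0 ≤ (1 - p n) ^ n / ((n : ℝ) * mu1 * p n) :=
              div_nonneg (pow_nonneg (hp1 n).le _)
                (by have := hp n; have : (0:ℝ) ≤ n := Nat.cast_nonneg n; positivity)
            have h3 : 0 < 1 / mun := by positivity
            simp only [hD]; linarith
    · -- upper bound, for n ≥ 2
      filter_upwards [eventually_ge_atTop 2] with n hn
      have hlog : 0 < Real.log n := Real.log_pos (by exact_mod_cast hn)
      have hn0 : (0:ℝ) < n := by positivity
      have key : D n * mu1 ≤ mu1 / mun + 1 / ((n:ℝ) * p n) + (1 + Real.log n) := by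
        have e1 : (1 - p n) ^ n / ((n : ℝ) * mu1 * p n) * mu1 ≤ 1 / ((n:ℝ) * p n) := by
          have hn0 : (0:ℝ) < n := by positivity
          rw [div_mul_eq_mul_div, div_le_div_iff₀ (mul_pos (mul_pos hn0 hmu1) (hp n))
            (mul_pos hn0 (hp n))]
          have hpow : (1 - p n) ^ n ≤ 1 := pow_le_one₀ (hp1 n).le (by linarith [hp n])
          calc (1 - p n) ^ n * mu1 * ((n:ℝ) * p n)
              ≤ 1 * mu1 * ((n:ℝ) * p n) := by
                have hn0 : (0:ℝ) < n := by positivity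
                exact mul_le_mul_of_nonneg_right (mul_le_mul_of_nonneg_right hpow hmu1.le)
                  (mul_pos hn0 (hp n)).le
            _ = 1 * ((n:ℝ) * mu1 * p n) := by ring
        have e2 : (∑ b ∈ Finset.Ico 1 n, (1 - p n) ^ b / ((b : ℝ) * mu1)) * mu1
            ≤ 1 + Real.log n := by
          have step : (∑ b ∈ Finset.Ico 1 n, (1 - p n) ^ b / ((b : ℝ) * mu1)) * mu1
              ≤ ∑ b ∈ Finset.Ico 1 n, ((b : ℝ))⁻¹ := by
            rw [Finset.sum_mul]
            refine Finset.sum_le_sum fun b hb => ?_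
            have hb' := Finset.mem_Ico.mp hb
            have hb0 : (0:ℝ) < b := by exact_mod_cast hb'.1
            have hpow : (1 - p n) ^ b ≤ 1 := pow_le_one₀ (hp1 n).le (by linarith [hp n])
            have hbne : ((b:ℝ)) ≠ 0 := hb0.ne'
            have heq : (1 - p n) ^ b / ((b:ℝ) * mu1) * mu1 = (1 - p n) ^ b * ((b:ℝ))⁻¹ := by
              field_simp
            rw [heq]
            exact mul_le_of_le_one_left (by positivity) hpow
          refine step.trans ?_
          rw [harm_eq]
          have := harmonic_le_one_add_log (n - 1)
          refine this.trans ?_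
          have hcast : ((n - 1 : ℕ) : ℝ) ≤ (n : ℝ) := by
            exact_mod_cast Nat.sub_le n 1
          have hpos : (0:ℝ) < ((n - 1 : ℕ) : ℝ) := by
            have : 1 ≤ n - 1 := by omega
            exact_mod_cast Nat.lt_of_lt_of_le Nat.zero_lt_one this
          have : Real.log ((n-1 : ℕ) : ℝ) ≤ Real.log (n : ℝ) :=
            Real.log_le_log hpos hcast
          linarith
        have : D n * mu1 = 1 / mun * mu1 + (1 - p n) ^ n / ((n : ℝ) * mu1 * p n) * mu1
            + (∑ b ∈ Finset.Ico 1 n, (1 - p n) ^ b / ((b : ℝ) * mu1)) * mu1 := by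
          simp only [hD]; ring
        rw [this, one_div, inv_mul_eq_div]
        have : mu1 / mun ≤ mu1 / mun := le_refl _
        linarith
      rw [div_le_iff₀ hlog]
      refine key.trans ?_
      have h2 := hp n
      have expand : ((mu1 / mun) / Real.log n + 1 / ((n:ℝ) * p n * Real.log n)
          + 1 / Real.log n + 1) * Real.log n
          = mu1 / mun + 1 / ((n:ℝ) * p n) + (1 + Real.log n) := by
        field_simp
        ring
      rw [expand]
  -- conclude
  have hinv : Tendsto (fun n : ℕ => (D n * mu1 / Real.log n)⁻¹) atTop (nhds 1) := by
    simpa using main.inv₀ (one_ne_zero)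
  refine hinv.congr' ?_
  filter_upwards [eventually_ge_atTop 2] with n hn
  have hlog : 0 < Real.log n := Real.log_pos (by exact_mod_cast hn)
  have hDn := hDpos n
  have hpn := hp n
  have key : ∀ d q l m : ℝ, d ≠ 0 → q ≠ 0 → l ≠ 0 → m ≠ 0 →
      (1/q) * d⁻¹ * q * l / m = (d * m / l)⁻¹ := by
    intro d q l m h1 h2 h3 h4
    field_simp
  show _ = (1 / p n) * (D n)⁻¹ * p n * Real.log n / mu1
  exact (key _ _ _ _ hDn.ne' hpn.ne' hlog.ne' hmu1.ne').symm
end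

section
/- Let μ_1, μ_n > 0 and define, for n ≥ 2 and p_n ∈ (0,1) with p_1 = 1 - p_n, the throughput μ = (1/p_n)(1/μ_n + p_1^n/(n μ_1 p_n) + ∑_{b=1}^{n-1} p_1^b/(b μ_1))^{-1}, and E[Δ(Y_d)] = p_1^n (1 − μ/(n μ_1))(n − 1 + 1/p_n − (μ/μ_1) H_{n-1} − μ/(n p_n μ_1)) + ∑_{i=1}^{n-1} p_1^i p_n (1 − μ/(i μ_1))(i − (μ/μ_1) H_i), where H_i = ∑_{k=1}^i 1/k. If p_n = o(1/(n ln n)) as n → ∞, then E[Δ(Y_d)] = o(1/p_n), i.e., p_n · E[Δ(Y_d)] → 0. -/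
/-- The `i`-th harmonic number `H_i = ∑_{k=1}^i 1/k`. -/
noncomputable def harmonicNum (i : ℕ) : ℝ := ∑ k ∈ Finset.Icc 1 i, (1 : ℝ) / k

/-- The completion-average expected relative completions `E[Δ(Y_d)]` of the
saturated 1-and-`n` multiserver-job system. -/
noncomputable def EDelta (mu1 mun : ℝ) (p : ℕ → ℝ) (n : ℕ) : ℝ :=
  (1 - p n) ^ n * (1 - muSat mu1 mun p n / ((n : ℝ) * mu1)) *
      ((n : ℝ) - 1 + 1 / p n - (muSat mu1 mun p n / mu1) * harmonicNum (n - 1) -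
        muSat mu1 mun p n / ((n : ℝ) * p n * mu1)) +
    ∑ i ∈ Finset.Ico 1 n,
      (1 - p n) ^ i * p n * (1 - muSat mu1 mun p n / ((i : ℝ) * mu1)) *
        ((i : ℝ) - (muSat mu1 mun p n / mu1) * harmonicNum i)

lemma harmonicNum_eq (m : ℕ) : harmonicNum m = ((harmonic m : ℚ) : ℝ) := by
  rw [harmonicNum, harmonic_eq_sum_Icc]; push_cast; simp [one_div]

lemma harmonicNum_nonneg (m : ℕ) : 0 ≤ harmonicNum m := by
  apply Finset.sum_nonneg; intro k _; positivity

lemma one_le_harmonicNum {m : ℕ} (hm : 1 ≤ m) : 1 ≤ harmonicNum m := by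
  have h := Finset.single_le_sum (f := fun k : ℕ => (1:ℝ)/k)
    (fun k _ => by positivity) (Finset.mem_Icc.mpr ⟨le_refl 1, hm⟩)
  simpa [harmonicNum, one_div] using h

lemma harmonicNum_mono : Monotone harmonicNum := by
  intro a b hab
  apply Finset.sum_le_sum_of_subset_of_nonneg
  · exact Finset.Icc_subset_Icc_right hab
  · intro k _ _; positivity

lemma harmonicNum_le_log (m : ℕ) : harmonicNum m ≤ 1 + Real.log m := by
  rw [harmonicNum_eq]; exact_mod_cast harmonic_le_one_add_log m

-- small arithmetic auxiliary lemmas (kept separate to keep `linarith` contexts small)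
lemma aux_mul2 {X d : ℝ} (hX : 0 ≤ X) (hd : 1/2 ≤ d) : X ≤ 2*X*d := by nlinarith

lemma aux_abs_one_sub {x y : ℝ} (hx : 0 ≤ x) (hxy : x ≤ y) : |1 - x| ≤ 1 + y := by
  rw [abs_le]; constructor <;> linarith

lemma aux_abs_sub {i z w : ℝ} (hi : 0 ≤ i) (hz : 0 ≤ z) (hzw : z ≤ w) :
    |i - z| ≤ i + w := by
  rw [abs_le]; constructor <;> linarith

lemma aux_abs_sub' {n z w : ℝ} (hn : 1 ≤ n) (hz : 0 ≤ z) (hzw : z ≤ w) :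
    |(n - 1) - z| ≤ n + w := by
  rw [abs_le]; constructor <;> linarith

lemma aux_combine {n a H : ℝ} (hn : 0 ≤ n) (ha : 0 ≤ a) (hH : 0 ≤ H) :
    (n + 2*n*H) + 2*n*(1+a+H) ≤ 4*n*(1+a)*(1+H) := by
  nlinarith [mul_nonneg hn ha, mul_nonneg (mul_nonneg hn ha) hH]

lemma aux_split {a H : ℝ} (ha : 0 ≤ a) (hH : 0 ≤ H) : 1+a+H ≤ (1+a)*(1+H) := by
  nlinarith

lemma aux_quad {i n H : ℝ} (hi1 : 1 ≤ i) (hin : i ≤ n) (hH : 1 ≤ H) :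
    (i+2*n)*(i+2*n*H) ≤ 9*n^2*H := by
  nlinarith [mul_nonneg (sub_nonneg.mpr hin) (by linarith : (0:ℝ) ≤ n),
    mul_nonneg (mul_nonneg (sub_nonneg.mpr hin) (by linarith : (0:ℝ) ≤ n))
      (by linarith : (0:ℝ) ≤ H),
    mul_nonneg (sub_nonneg.mpr hin) (by linarith : (0:ℝ) ≤ i),
    mul_nonneg (mul_nonneg (by linarith : (0:ℝ) ≤ n) (by linarith : (0:ℝ) ≤ n))
      (by linarith : (0:ℝ) ≤ H - 1),
    mul_nonneg (mul_nonneg (sub_nonneg.mpr hin) (by linarith : (0:ℝ) ≤ n))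
      (by linarith : (0:ℝ) ≤ H - 1)]

lemma aux_T2 {e n H : ℝ} (he : 0 ≤ e) (hn : 0 ≤ n) (hH : 0 ≤ H) :
    e*(e*(9*n^2*H*H)) ≤ 9*(e*n*(1+H))^2 := by
  nlinarith [mul_nonneg (mul_nonneg (mul_nonneg he he) (mul_nonneg hn hn)) hH,
    mul_nonneg (mul_nonneg he he) (mul_nonneg hn hn)]

set_option maxHeartbeats 2000000 in
lemma key_bound (mu1 mun : ℝ) (hmu1 : 0 < mu1) (hmun : 0 < mun)
    (p : ℕ → ℝ) (n : ℕ) (hn : 2 ≤ n)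
    (hε0 : 0 < p n) (hε1 : p n < 1) (hnp : (n : ℝ) * p n ≤ 1/2) :
    |p n * EDelta mu1 mun p n| ≤
      (8*(1+mu1/mun)^2+9) * (p n * ((n:ℝ) * (2 + Real.log n)))^2 := by
  set ε := p n with hεdef
  clear_value ε
  have hn0 : (0:ℝ) < n := by exact_mod_cast Nat.pos_of_ne_zero (by omega)
  set q := 1 - ε with hqdef
  clear_value q
  have hq0 : 0 < q := by rw [hqdef]; linarith
  have hq1 : q ≤ 1 := by rw [hqdef]; linarith
  have hqn1 : q ^ n ≤ 1 := pow_le_one₀ hq0.le hq1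
  have hqn : 1 - (n:ℝ) * ε ≤ q ^ n := by
    have h := one_add_mul_le_pow (show (-2:ℝ) ≤ -ε by linarith) n
    rw [show (1:ℝ) + -ε = 1 - ε by ring] at h
    rw [hqdef]; linarith
  have hqhalf : (1:ℝ)/2 ≤ q ^ n := by linarith
  set S := ∑ b ∈ Finset.Ico 1 n, q ^ b / ((b : ℝ) * mu1) with hSdef
  clear_value S
  set H := harmonicNum (n-1) with hHdef
  clear_value H
  have hH1 : 1 ≤ H := by rw [hHdef]; exact one_le_harmonicNum (by omega)
  have hH0 : 0 ≤ H := by linarith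
  have hIco : Finset.Ico 1 n = Finset.Icc 1 (n-1) := by
    rw [← Finset.Ico_add_one_right_eq_Icc]; congr 1; omega
  have hS0 : 0 ≤ S := by
    rw [hSdef]; exact Finset.sum_nonneg fun b _ => by positivity
  have hSle : S ≤ H / mu1 := by
    rw [hSdef, hHdef, harmonicNum, Finset.sum_div, ← hIco]
    apply Finset.sum_le_sum
    intro b hb
    have hb1 : 1 ≤ b := (Finset.mem_Ico.mp hb).1
    have hb0 : (0:ℝ) < b := by exact_mod_cast hb1
    rw [div_div]
    gcongr
    exact pow_le_one₀ hq0.le hq1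
  set D := 1/mun + q^n/((n:ℝ)*mu1*ε) + S with hDdef
  clear_value D
  have hD0 : 0 < D := by
    have h1 : 0 < 1/mun + q^n/((n:ℝ)*mu1*ε) := by positivity
    rw [hDdef]; linarith
  set d := (n:ℝ)*mu1*ε*D with hddef
  clear_value d
  have hd0 : 0 < d := by rw [hddef]; positivity
  have hdexp : d = (n:ℝ)*ε*(mu1/mun) + q^n + (n:ℝ)*mu1*ε*S := by
    rw [hddef, hDdef, mul_add, mul_add]
    have h1 : (n:ℝ)*mu1*ε*(q^n/((n:ℝ)*mu1*ε)) = q^n := by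
      rw [mul_div_cancel₀]
      positivity
    rw [h1]; ring
  have hd_half : 1/2 ≤ d := by
    have h1 : 0 ≤ (n:ℝ)*ε*(mu1/mun) := by positivity
    have h2 : 0 ≤ (n:ℝ)*mu1*ε*S := by positivity
    linarith only [hdexp, h1, h2, hqhalf]
  set a := mu1/mun with hadef
  clear_value a
  have ha0 : 0 ≤ a := by rw [hadef]; positivity
  have habs_d : |d - 1| ≤ (n:ℝ)*ε*(1 + a + H) := by
    have hSH : (n:ℝ)*mu1*ε*S ≤ (n:ℝ)*ε*H := by
      calc (n:ℝ)*mu1*ε*S ≤ (n:ℝ)*mu1*ε*(H/mu1) := by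
            apply mul_le_mul_of_nonneg_left hSle (by positivity)
        _ = (n:ℝ)*ε*H := by field_simp
    have hexp : (n:ℝ)*ε*(1+a+H) = (n:ℝ)*ε + (n:ℝ)*ε*a + (n:ℝ)*ε*H := by ring
    have h1 : 0 ≤ (n:ℝ)*ε*a := by positivity
    have h2 : 0 ≤ (n:ℝ)*mu1*ε*S := by positivity
    have h3 : 0 ≤ (n:ℝ)*ε*H := by positivity
    have h4 : 0 ≤ (n:ℝ)*ε := by positivity
    rw [abs_le]
    constructor
    · linarith only [hdexp, hqn, hexp, h1, h2, h3, h4]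
    · linarith only [hdexp, hqn1, hSH, hexp, h1, h4]
  -- the throughput equals n*mu1/d
  have hmu : muSat mu1 mun p n = (n:ℝ)*mu1/d := by
    rw [muSat, ← hεdef, ← hqdef, ← hSdef, ← hDdef, hddef]
    rw [eq_div_iff (by positivity)]
    field_simp
  -- clean form of EDelta
  have hED : EDelta mu1 mun p n =
      q^n * (1 - 1/d) * ((n:ℝ) - 1 + 1/ε - ((n:ℝ)/d) * H - 1/(ε*d)) +
      ∑ i ∈ Finset.Ico 1 n, q^i * ε * (1 - (n:ℝ)/(d*(i:ℝ))) *
        ((i:ℝ) - ((n:ℝ)/d) * harmonicNum i) := by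
    rw [EDelta, hmu, ← hεdef, ← hqdef, ← hHdef]
    have e1 : (n:ℝ)*mu1/d/((n:ℝ)*mu1) = 1/d := by
      rw [div_div, div_eq_div_iff (by positivity) hd0.ne']; ring
    have e2 : (n:ℝ)*mu1/d/mu1 = (n:ℝ)/d := by
      rw [div_div, div_eq_div_iff (by positivity) (by positivity)]; ring
    have e3 : (n:ℝ)*mu1/d/((n:ℝ)*ε*mu1) = 1/(ε*d) := by
      rw [div_div, div_eq_div_iff (by positivity) (by positivity)]; ring
    rw [e1, e2, e3]
    congr 1
    apply Finset.sum_congr rfl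
    intro i hi
    have hi1 : 1 ≤ i := (Finset.mem_Ico.mp hi).1
    have hi0 : (0:ℝ) < i := by exact_mod_cast hi1
    have e4 : (n:ℝ)*mu1/d/((i:ℝ)*mu1) = (n:ℝ)/(d*(i:ℝ)) := by
      rw [div_div, div_eq_div_iff (by positivity) (by positivity)]; ring
    rw [e4]
  have hn2 : (2:ℝ) ≤ (n:ℝ) := by exact_mod_cast hn
  -- bound |1 - 1/d|
  have hX0 : 0 ≤ (n:ℝ)*ε*(1+a+H) := by positivity
  have h1d : |1 - 1/d| ≤ 2*((n:ℝ)*ε*(1+a+H)) := by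
    have he : 1 - 1/d = (d-1)/d := by field_simp
    rw [he, abs_div, abs_of_pos hd0, div_le_iff₀ hd0]
    calc |d - 1| ≤ (n:ℝ)*ε*(1+a+H) := habs_d
      _ ≤ 2*((n:ℝ)*ε*(1+a+H))*d := aux_mul2 hX0 hd_half
  have hnd : (n:ℝ)/d ≤ 2*(n:ℝ) := by
    rw [div_le_iff₀ hd0]
    exact aux_mul2 hn0.le hd_half
  have hnd0 : 0 ≤ (n:ℝ)/d := by positivity
  -- bound on the big parenthesis
  have hP : |(n:ℝ) - 1 + 1/ε - ((n:ℝ)/d)*H - 1/(ε*d)| ≤ 4*(n:ℝ)*(1+a)*(1+H) := by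
    have hPeq : (n:ℝ) - 1 + 1/ε - ((n:ℝ)/d)*H - 1/(ε*d)
        = (((n:ℝ)-1) - ((n:ℝ)/d)*H) + (1/ε)*(1 - 1/d) := by
      field_simp
      ring
    rw [hPeq]
    have b3 : |(1/ε)*(1 - 1/d)| ≤ 2*(n:ℝ)*(1+a+H) := by
      rw [abs_mul, abs_of_pos (by positivity : (0:ℝ) < 1/ε)]
      calc (1/ε)*|1-1/d| ≤ (1/ε)*(2*((n:ℝ)*ε*(1+a+H))) :=
            mul_le_mul_of_nonneg_left h1d (by positivity)
        _ = 2*(n:ℝ)*(1+a+H) := by field_simp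
    have b2 : ((n:ℝ)/d)*H ≤ 2*(n:ℝ)*H := mul_le_mul_of_nonneg_right hnd hH0
    have b2' : 0 ≤ ((n:ℝ)/d)*H := mul_nonneg hnd0 hH0
    have babs : |(((n:ℝ)-1) - ((n:ℝ)/d)*H)| ≤ (n:ℝ) + 2*(n:ℝ)*H :=
      aux_abs_sub' (by linarith only [hn2]) b2' b2
    calc |(((n:ℝ)-1) - ((n:ℝ)/d)*H) + (1/ε)*(1 - 1/d)|
        ≤ |(((n:ℝ)-1) - ((n:ℝ)/d)*H)| + |(1/ε)*(1 - 1/d)| := abs_add_le _ _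
      _ ≤ ((n:ℝ) + 2*(n:ℝ)*H) + 2*(n:ℝ)*(1+a+H) := by
          linarith only [babs, b3]
      _ ≤ 4*(n:ℝ)*(1+a)*(1+H) := aux_combine hn0.le ha0 hH0
  have hsplit : 1+a+H ≤ (1+a)*(1+H) := aux_split ha0 hH0
  -- first term bound
  have hT1 : |ε * (q^n * (1 - 1/d) * ((n:ℝ) - 1 + 1/ε - ((n:ℝ)/d)*H - 1/(ε*d)))|
      ≤ 8*(1+a)^2*(ε*(n:ℝ)*(1+H))^2 := by
    rw [abs_mul, abs_mul, abs_mul, abs_of_pos hε0,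
      abs_of_nonneg (pow_nonneg hq0.le n)]
    calc ε * (q^n * |1 - 1/d| * |(n:ℝ) - 1 + 1/ε - ((n:ℝ)/d)*H - 1/(ε*d)|)
        ≤ ε * (1 * (2*((n:ℝ)*ε*((1+a)*(1+H)))) * (4*(n:ℝ)*(1+a)*(1+H))) := by
          have h1d' : |1 - 1/d| ≤ 2*((n:ℝ)*ε*((1+a)*(1+H))) := by
            refine h1d.trans ?_
            gcongr
          gcongr
      _ = 8*(1+a)^2*(ε*(n:ℝ)*(1+H))^2 := by ring
  -- per-term bound in the sum
  have hTerm : ∀ i ∈ Finset.Ico 1 n,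
      |q^i * ε * (1 - (n:ℝ)/(d*(i:ℝ))) * ((i:ℝ) - ((n:ℝ)/d) * harmonicNum i)|
        ≤ ε * (9*(n:ℝ)^2*H*(1/(i:ℝ))) := by
    intro i hi
    obtain ⟨hi1, hi2⟩ := Finset.mem_Ico.mp hi
    have hi0 : (0:ℝ) < (i:ℝ) := by exact_mod_cast hi1
    have hi1' : (1:ℝ) ≤ (i:ℝ) := by exact_mod_cast hi1
    have hin : (i:ℝ) ≤ (n:ℝ) := by exact_mod_cast hi2.le
    have hHi : harmonicNum i ≤ H := by
      rw [hHdef]; exact harmonicNum_mono (by omega : i ≤ n-1)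
    have hHi0 : 0 ≤ harmonicNum i := harmonicNum_nonneg i
    have hmidef : (n:ℝ)/(d*(i:ℝ)) = ((n:ℝ)/d)*(1/(i:ℝ)) := by ring
    have hmi : (n:ℝ)/(d*(i:ℝ)) ≤ 2*(n:ℝ)/(i:ℝ) := by
      rw [hmidef]
      calc ((n:ℝ)/d)*(1/(i:ℝ)) ≤ (2*(n:ℝ))*(1/(i:ℝ)) :=
            mul_le_mul_of_nonneg_right hnd (by positivity)
        _ = 2*(n:ℝ)/(i:ℝ) := by ring
    have hmi0 : 0 ≤ (n:ℝ)/(d*(i:ℝ)) := by positivity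
    have habs1 : |1 - (n:ℝ)/(d*(i:ℝ))| ≤ 1 + 2*(n:ℝ)/(i:ℝ) :=
      aux_abs_one_sub hmi0 hmi
    have hndHi : ((n:ℝ)/d)*harmonicNum i ≤ 2*(n:ℝ)*H :=
      mul_le_mul hnd hHi hHi0 (by positivity)
    have hndHi0 : 0 ≤ ((n:ℝ)/d)*harmonicNum i := mul_nonneg hnd0 hHi0
    have habs2 : |(i:ℝ) - ((n:ℝ)/d)*harmonicNum i| ≤ (i:ℝ) + 2*(n:ℝ)*H :=
      aux_abs_sub hi0.le hndHi0 hndHi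
    calc |q^i * ε * (1 - (n:ℝ)/(d*(i:ℝ))) * ((i:ℝ) - ((n:ℝ)/d) * harmonicNum i)|
        = q^i * ε * |1 - (n:ℝ)/(d*(i:ℝ))| * |(i:ℝ) - ((n:ℝ)/d) * harmonicNum i| := by
          rw [abs_mul, abs_mul, abs_mul, abs_of_nonneg (pow_nonneg hq0.le i),
            abs_of_pos hε0]
      _ ≤ 1 * ε * (1 + 2*(n:ℝ)/(i:ℝ)) * ((i:ℝ) + 2*(n:ℝ)*H) := by
          gcongr
          exact pow_le_one₀ hq0.le hq1
      _ = ε * ((((i:ℝ)+2*(n:ℝ))*((i:ℝ)+2*(n:ℝ)*H)) * (1/(i:ℝ))) := by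
          have e : ((i:ℝ)+2*(n:ℝ)) * (1/(i:ℝ)) = 1 + 2*(n:ℝ)/(i:ℝ) := by
            rw [add_mul, mul_one_div, mul_one_div, div_self hi0.ne']
          rw [← e]; ring
      _ ≤ ε * ((9*(n:ℝ)^2*H) * (1/(i:ℝ))) := by
          have key : ((i:ℝ)+2*(n:ℝ))*((i:ℝ)+2*(n:ℝ)*H) ≤ 9*(n:ℝ)^2*H :=
            aux_quad hi1' hin hH1
          gcongr
      _ = ε * (9*(n:ℝ)^2*H*(1/(i:ℝ))) := by ring
  have hIcoSum : ∑ i ∈ Finset.Ico 1 n, (1:ℝ)/(i:ℝ) = H := by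
    rw [hIco, hHdef, harmonicNum]
  have hsum : |∑ i ∈ Finset.Ico 1 n, q^i * ε * (1 - (n:ℝ)/(d*(i:ℝ))) *
      ((i:ℝ) - ((n:ℝ)/d) * harmonicNum i)| ≤ ε * (9*(n:ℝ)^2*H*H) := by
    calc |∑ i ∈ Finset.Ico 1 n, q^i * ε * (1 - (n:ℝ)/(d*(i:ℝ))) *
          ((i:ℝ) - ((n:ℝ)/d) * harmonicNum i)|
        ≤ ∑ i ∈ Finset.Ico 1 n, |q^i * ε * (1 - (n:ℝ)/(d*(i:ℝ))) *
          ((i:ℝ) - ((n:ℝ)/d) * harmonicNum i)| := Finset.abs_sum_le_sum_abs _ _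
      _ ≤ ∑ i ∈ Finset.Ico 1 n, ε * (9*(n:ℝ)^2*H*(1/(i:ℝ))) :=
          Finset.sum_le_sum hTerm
      _ = (ε * (9*(n:ℝ)^2*H)) * ∑ i ∈ Finset.Ico 1 n, (1:ℝ)/(i:ℝ) := by
          rw [Finset.mul_sum]
          exact Finset.sum_congr rfl fun i _ => by ring
      _ = ε * (9*(n:ℝ)^2*H*H) := by rw [hIcoSum]; ring
  have hT2 : |ε * ∑ i ∈ Finset.Ico 1 n, q^i * ε * (1 - (n:ℝ)/(d*(i:ℝ))) *
      ((i:ℝ) - ((n:ℝ)/d) * harmonicNum i)| ≤ 9*(ε*(n:ℝ)*(1+H))^2 := by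
    rw [abs_mul, abs_of_pos hε0]
    calc ε * |∑ i ∈ Finset.Ico 1 n, q^i * ε * (1 - (n:ℝ)/(d*(i:ℝ))) *
          ((i:ℝ) - ((n:ℝ)/d) * harmonicNum i)|
        ≤ ε * (ε * (9*(n:ℝ)^2*H*H)) := mul_le_mul_of_nonneg_left hsum hε0.le
      _ ≤ 9*(ε*(n:ℝ)*(1+H))^2 := aux_T2 hε0.le hn0.le hH0
  -- combine
  have hcomb : |ε * EDelta mu1 mun p n| ≤ (8*(1+a)^2+9) * (ε*(n:ℝ)*(1+H))^2 := by
    rw [hED, mul_add]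
    calc |ε * (q^n * (1 - 1/d) * ((n:ℝ) - 1 + 1/ε - ((n:ℝ)/d)*H - 1/(ε*d))) +
          ε * ∑ i ∈ Finset.Ico 1 n, q^i * ε * (1 - (n:ℝ)/(d*(i:ℝ))) *
            ((i:ℝ) - ((n:ℝ)/d) * harmonicNum i)|
        ≤ |ε * (q^n * (1 - 1/d) * ((n:ℝ) - 1 + 1/ε - ((n:ℝ)/d)*H - 1/(ε*d)))| +
          |ε * ∑ i ∈ Finset.Ico 1 n, q^i * ε * (1 - (n:ℝ)/(d*(i:ℝ))) *
            ((i:ℝ) - ((n:ℝ)/d) * harmonicNum i)| := abs_add_le _ _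
      _ ≤ 8*(1+a)^2*(ε*(n:ℝ)*(1+H))^2 + 9*(ε*(n:ℝ)*(1+H))^2 := by
          linarith only [hT1, hT2]
      _ = (8*(1+a)^2+9) * (ε*(n:ℝ)*(1+H))^2 := by ring
  -- harmonic vs log
  have hlog : H ≤ 1 + Real.log n := by
    rw [hHdef]
    refine (harmonicNum_le_log (n-1)).trans ?_
    have h1 : (1:ℝ) ≤ ((n-1 : ℕ):ℝ) := by exact_mod_cast (by omega : 1 ≤ n - 1)
    have h2 : ((n-1 : ℕ):ℝ) ≤ (n:ℝ) := by exact_mod_cast (by omega : n - 1 ≤ n)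
    have := Real.log_le_log (by linarith) h2
    linarith
  have hfin : ε*(n:ℝ)*(1+H) ≤ ε*((n:ℝ)*(2+Real.log n)) := by
    have h1 : (1:ℝ)+H ≤ 2+Real.log n := by linarith only [hlog]
    calc ε*(n:ℝ)*(1+H) ≤ ε*(n:ℝ)*(2+Real.log n) := by
          apply mul_le_mul_of_nonneg_left h1 (by positivity)
      _ = ε*((n:ℝ)*(2+Real.log n)) := by ring
  calc |ε * EDelta mu1 mun p n| ≤ (8*(1+a)^2+9) * (ε*(n:ℝ)*(1+H))^2 := hcomb
    _ ≤ (8*(1+a)^2+9) * (ε*((n:ℝ)*(2+Real.log n)))^2 := by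
        apply mul_le_mul_of_nonneg_left _ (by positivity)
        exact pow_le_pow_left₀ (by positivity) hfin 2

theorem stmt_18 (mu1 mun : ℝ) (hmu1 : 0 < mu1) (hmun : 0 < mun)
    (p : ℕ → ℝ) (hmem : ∀ n, 0 < p n ∧ p n < 1)
    (hsmall : Filter.Tendsto (fun n : ℕ => p n * ((n : ℝ) * Real.log n))
      Filter.atTop (nhds 0)) :
    Filter.Tendsto (fun n : ℕ => p n * EDelta mu1 mun p n) Filter.atTop (nhds 0) := by
  have hpn0 : ∀ n, 0 ≤ p n := fun n => (hmem n).1.le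
  -- p n * n → 0
  have hnn : Filter.Tendsto (fun n : ℕ => p n * (n:ℝ)) Filter.atTop (nhds 0) := by
    apply squeeze_zero' ?_ ?_ hsmall
    · filter_upwards [] with n
      exact mul_nonneg (hpn0 n) (Nat.cast_nonneg n)
    · filter_upwards [Filter.eventually_ge_atTop 3] with n hn
      have hn3 : (3:ℝ) ≤ (n:ℝ) := by exact_mod_cast hn
      have hlog1 : (1:ℝ) ≤ Real.log n := by
        rw [Real.le_log_iff_exp_le (by linarith)]
        have := Real.exp_one_lt_d9
        linarith
      have : (n:ℝ) ≤ (n:ℝ) * Real.log n := by nlinarith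
      exact mul_le_mul_of_nonneg_left this (hpn0 n)
  -- the bounding sequence tends to 0
  have hB : Filter.Tendsto (fun n : ℕ => p n * ((n:ℝ) * (2 + Real.log n)))
      Filter.atTop (nhds 0) := by
    have heq : (fun n : ℕ => p n * ((n:ℝ) * (2 + Real.log n)))
        = fun n : ℕ => 2*(p n * (n:ℝ)) + p n * ((n:ℝ) * Real.log n) := by
      funext n; ring
    rw [heq]
    have := (hnn.const_mul 2).add hsmall
    simpa using this
  have hB2 : Filter.Tendsto
      (fun n : ℕ => (8*(1+mu1/mun)^2+9) * (p n * ((n:ℝ) * (2 + Real.log n)))^2)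
      Filter.atTop (nhds 0) := by
    have := ((hB.pow 2).const_mul (8*(1+mu1/mun)^2+9))
    simpa using this
  apply squeeze_zero_norm' ?_ hB2
  have hev : ∀ᶠ n : ℕ in Filter.atTop, p n * (n:ℝ) < 1/2 :=
    hnn.eventually_lt_const (by norm_num)
  filter_upwards [Filter.eventually_ge_atTop 2, hev] with n hn2 hhalf
  rw [Real.norm_eq_abs]
  exact key_bound mu1 mun hmu1 hmun p n hn2 (hmem n).1 (hmem n).2
    (by linarith [hhalf])
end

section
/- Let μ_1, μ_n > 0, α > 1, and p_n = n^{-α}, p_1 = 1 - p_n. With μ and E[Δ(Y_d)] defined by μ = (1/p_n)(1/μ_n + p_1^n/(n μ_1 p_n) + ∑_{b=1}^{n-1} p_1^b/(b μ_1))^{-1} and E[Δ(Y_d)] = p_1^n (1 − μ/(n μ_1))(n − 1 + 1/p_n − (μ/μ_1) H_{n-1} − μ/(n p_n μ_1)) + ∑_{i=1}^{n-1} p_1^i p_n (1 − μ/(i μ_1))(i − (μ/μ_1) H_i), we have E[Δ(Y_d)] / (½ n^{2-α} ln² n) → 1 as n → ∞. -/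
open Filter Real

namespace S19

/- ### Harmonic number helpers -/

lemma harmonicNum_eq (n : ℕ) : harmonicNum n = (harmonic n : ℝ) := by
  rw [harmonicNum, harmonic_eq_sum_Icc]
  push_cast
  simp [one_div]

lemma harmonicNum_nonneg (n : ℕ) : 0 ≤ harmonicNum n :=
  Finset.sum_nonneg fun i _ => by positivity

lemma harmonicNum_succ (n : ℕ) : harmonicNum (n+1) = harmonicNum n + 1/(n+1 : ℝ) := by
  rw [harmonicNum, harmonicNum, Finset.sum_Icc_succ_top (Nat.le_add_left 1 n)]
  push_cast; ring

lemma harmonicNum_mono : Monotone harmonicNum := by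
  intro a b hab
  exact Finset.sum_le_sum_of_subset_of_nonneg (Finset.Icc_subset_Icc le_rfl hab)
    (fun i _ _ => by positivity)

lemma log_le_harmonicNum (n : ℕ) : Real.log (n+1) ≤ harmonicNum n := by
  rw [harmonicNum_eq]
  exact_mod_cast log_add_one_le_harmonic n

lemma harmonicNum_le (n : ℕ) : harmonicNum n ≤ 1 + Real.log n := by
  rw [harmonicNum_eq]
  exact_mod_cast harmonic_le_one_add_log n

lemma sq_sum_aux : ∀ n : ℕ, 1 ≤ n → ∑ i ∈ Finset.Icc 1 n, (1:ℝ)/(i:ℝ)^2 ≤ 2 - 1/n := by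
  intro n hn
  induction n with
  | zero => omega
  | succ m ih =>
    rcases Nat.eq_or_lt_of_le hn with h | h
    · simp [← h]; norm_num
    · have hm : 1 ≤ m := by omega
      have hm' : (0:ℝ) < m := by exact_mod_cast hm
      rw [Finset.sum_Icc_succ_top (Nat.le_add_left 1 m)]
      have h2 : (1:ℝ)/((m:ℝ)+1)^2 ≤ 1/m - 1/(m+1) := by
        rw [div_sub_div _ _ (ne_of_gt hm') (by positivity)]
        rw [div_le_div_iff₀ (by positivity) (by positivity)]
        ring_nf
        nlinarith
      push_cast
      have := ih hm
      push_cast at this ⊢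
      linarith

lemma sq_sum_le (n : ℕ) : ∑ i ∈ Finset.Icc 1 n, (1:ℝ)/(i:ℝ)^2 ≤ 2 := by
  rcases Nat.eq_zero_or_pos n with h | h
  · simp [h]
  · have h' : (0:ℝ) < n := by exact_mod_cast h
    have h2 : (0:ℝ) < 1/n := by positivity
    linarith [sq_sum_aux n h]

lemma sq_sum_nonneg (n : ℕ) : 0 ≤ ∑ i ∈ Finset.Icc 1 n, (1:ℝ)/(i:ℝ)^2 :=
  Finset.sum_nonneg fun i _ => by positivity

lemma sum_harm_div (m : ℕ) :
    ∑ i ∈ Finset.Icc 1 m, harmonicNum i / i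
      = (harmonicNum m ^ 2 + ∑ i ∈ Finset.Icc 1 m, (1:ℝ)/(i:ℝ)^2) / 2 := by
  induction m with
  | zero => simp [harmonicNum]
  | succ k ih =>
    rw [Finset.sum_Icc_succ_top (Nat.le_add_left 1 k),
        Finset.sum_Icc_succ_top (Nat.le_add_left 1 k), ih, harmonicNum_succ]
    have h : ((k:ℝ)+1) ≠ 0 := by positivity
    push_cast
    field_simp
    ring

/- ### Structural definitions -/

noncomputable def SS (p : ℕ → ℝ) (n : ℕ) : ℝ := ∑ b ∈ Finset.Ico 1 n, (1 - p n)^b / (b:ℝ)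

noncomputable def DD (mu1 mun : ℝ) (p : ℕ → ℝ) (n : ℕ) : ℝ :=
  mu1/mun + (1 - p n)^n/((n:ℝ) * p n) + SS p n

noncomputable def RR (mu1 mun : ℝ) (p : ℕ → ℝ) (n : ℕ) : ℝ :=
  1/(p n * DD mu1 mun p n)

noncomputable def TA (p : ℕ → ℝ) (n : ℕ) : ℝ := ∑ i ∈ Finset.Ico 1 n, (1 - p n)^i * i
noncomputable def TB (p : ℕ → ℝ) (n : ℕ) : ℝ := ∑ i ∈ Finset.Ico 1 n, (1 - p n)^i * harmonicNum i
noncomputable def TC (p : ℕ → ℝ) (n : ℕ) : ℝ := ∑ i ∈ Finset.Ico 1 n, (1 - p n)^i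
noncomputable def TD (p : ℕ → ℝ) (n : ℕ) : ℝ :=
  ∑ i ∈ Finset.Ico 1 n, (1 - p n)^i * harmonicNum i / i

noncomputable def T1 (mu1 mun : ℝ) (p : ℕ → ℝ) (n : ℕ) : ℝ :=
  (1 - p n)^n * (1 - RR mu1 mun p n / (n:ℝ)) *
    ((n:ℝ) - 1 + 1/p n - RR mu1 mun p n * harmonicNum (n-1)
      - RR mu1 mun p n/((n:ℝ) * p n))

noncomputable def sN (α : ℝ) (n : ℕ) : ℝ := (1/2) * (n:ℝ)^(2-α) * (Real.log n)^2

lemma muSat_div_mu1 (mu1 mun : ℝ) (hmu1 : mu1 ≠ 0) (p : ℕ → ℝ) (n : ℕ) :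
    muSat mu1 mun p n / mu1 = RR mu1 mun p n := by
  have h2 : (1 / mun + (1 - p n) ^ n / ((n : ℝ) * mu1 * p n) +
      ∑ b ∈ Finset.Ico 1 n, (1 - p n) ^ b / ((b : ℝ) * mu1))
      = mu1⁻¹ * DD mu1 mun p n := by
    rw [DD, SS, mul_add, mul_add, Finset.mul_sum]
    congr 1
    · congr 1
      · rw [← mul_div_assoc, inv_mul_cancel₀ hmu1]
      · rw [inv_eq_one_div, div_mul_div_comm, one_mul]
        congr 1; ring
    · refine Finset.sum_congr rfl fun b _ => ?_
      rw [inv_eq_one_div, div_mul_div_comm, one_mul]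
      congr 1; ring
  rw [muSat, h2, mul_inv, inv_inv]
  rw [mul_left_comm, mul_div_cancel_left₀ _ hmu1, RR, one_div, one_div, mul_inv]

lemma EDelta_eq (mu1 mun : ℝ) (hmu1 : mu1 ≠ 0) (p : ℕ → ℝ) (n : ℕ) :
    EDelta mu1 mun p n =
      T1 mu1 mun p n
      + (p n * TA p n - p n * RR mu1 mun p n * TB p n - p n * RR mu1 mun p n * TC p n
          + p n * (RR mu1 mun p n)^2 * TD p n) := by
  set R := RR mu1 mun p n with hR
  have key : muSat mu1 mun p n / mu1 = R := muSat_div_mu1 mu1 mun hmu1 p n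
  have hdiv : ∀ x : ℝ, muSat mu1 mun p n / (x * mu1) = R / x := by
    intro x
    rw [mul_comm x mu1, ← div_div, key]
  have hdiv2 : muSat mu1 mun p n / ((n:ℝ) * p n * mu1) = R / ((n:ℝ) * p n) := by
    rw [← div_div, div_right_comm, key]
  have hsum : ∀ i ∈ Finset.Ico 1 n,
      (1 - p n) ^ i * p n * (1 - muSat mu1 mun p n / ((i : ℝ) * mu1)) *
        ((i : ℝ) - (muSat mu1 mun p n / mu1) * harmonicNum i)
      = p n * ((1 - p n)^i * i) - p n * R * ((1 - p n)^i * harmonicNum i)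
        - p n * R * (1 - p n)^i + p n * R^2 * ((1 - p n)^i * harmonicNum i / i) := by
    intro i hi
    have hi1 : 1 ≤ i := (Finset.mem_Ico.mp hi).1
    have hi0 : (i:ℝ) ≠ 0 := by positivity
    rw [hdiv (i:ℝ), key]
    field_simp
    ring
  rw [EDelta, Finset.sum_congr rfl hsum, hdiv (n:ℝ), hdiv2, key]
  congr 1
  rw [Finset.sum_add_distrib, Finset.sum_sub_distrib, Finset.sum_sub_distrib,
    ← Finset.mul_sum, ← Finset.mul_sum, ← Finset.mul_sum, ← Finset.mul_sum]
  rw [TA, TB, TC, TD]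

/- ### Pointwise facts -/

lemma H_le_log {n : ℕ} (hn : 2 ≤ n) : harmonicNum (n-1) ≤ 1 + Real.log n := by
  refine (harmonicNum_le (n-1)).trans ?_
  have : Real.log ((n-1:ℕ):ℝ) ≤ Real.log n :=
    Real.log_le_log (by exact_mod_cast (by omega : 0 < n-1)) (by exact_mod_cast Nat.sub_le n 1)
  linarith

lemma Ico_eq_Icc {n : ℕ} (hn : 1 ≤ n) : Finset.Ico 1 n = Finset.Icc 1 (n-1) := by
  conv_lhs => rw [show n = (n-1)+1 by omega]
  rw [Finset.Ico_add_one_right_eq_Icc]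

lemma facts {mu1 mun α : ℝ} {p : ℕ → ℝ} {n : ℕ}
    (hmu1 : 0 < mu1) (hmun : 0 < mun) (hα : 1 < α)
    (hp : p n = (n:ℝ)^(-α)) (hn : 2 ≤ n) (hnp : (n:ℝ)*p n ≤ 1/2) :
    0 < p n ∧ p n ≤ 1 ∧ 0 ≤ SS p n ∧ SS p n ≤ harmonicNum (n-1) ∧
    harmonicNum (n-1) - SS p n ≤ (n:ℝ)*p n ∧
    1 - (n:ℝ)*p n ≤ (1-p n)^n ∧ (1-p n)^n ≤ 1 ∧
    0 < DD mu1 mun p n ∧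
    (n:ℝ)*p n*DD mu1 mun p n
      = (mu1/mun)*((n:ℝ)*p n) + (1-p n)^n + ((n:ℝ)*p n)*SS p n ∧
    0 < RR mu1 mun p n ∧ RR mu1 mun p n ≤ 2*n := by
  have hn0 : (0:ℝ) < n := by exact_mod_cast (by omega : 0 < n)
  have hn1 : (1:ℝ) ≤ n := by exact_mod_cast (by omega : 1 ≤ n)
  have hP : 0 < p n := by rw [hp]; exact Real.rpow_pos_of_pos hn0 _
  have hP1 : p n ≤ 1 := by
    rw [hp]; exact Real.rpow_le_one_of_one_le_of_nonpos hn1 (by linarith)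
  have hq0 : 0 ≤ 1 - p n := by linarith
  have hq1 : 1 - p n ≤ 1 := by linarith
  have hqpow1 : ∀ b : ℕ, (1 - p n)^b ≤ 1 := fun b => pow_le_one₀ hq0 hq1
  have hqpow0 : ∀ b : ℕ, 0 ≤ (1 - p n)^b := fun b => pow_nonneg hq0 b
  have hS0 : 0 ≤ SS p n := Finset.sum_nonneg fun b _ => by
    have := hqpow0 b; positivity
  have hIcc := Ico_eq_Icc (by omega : 1 ≤ n)
  have hSle : SS p n ≤ harmonicNum (n-1) := by
    rw [SS, hIcc, harmonicNum]
    refine Finset.sum_le_sum fun b hb => ?_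
    have hb1 : 1 ≤ b := (Finset.mem_Icc.mp hb).1
    have hb0 : (0:ℝ) < b := by exact_mod_cast hb1
    rw [div_le_div_iff_of_pos_right hb0]
    exact hqpow1 b
  have hbern : ∀ b : ℕ, 1 - (b:ℝ)*p n ≤ (1-p n)^b := by
    intro b
    have := one_add_mul_le_pow (a := -(p n)) (by linarith) b
    calc 1 - (b:ℝ)*p n = 1 + (b:ℝ)*(-(p n)) := by ring
    _ ≤ (1 + -(p n))^b := this
    _ = (1 - p n)^b := by ring_nf
  have hHS : harmonicNum (n-1) - SS p n ≤ (n:ℝ)*p n := by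
    rw [SS, hIcc, harmonicNum, ← Finset.sum_sub_distrib]
    have step : ∀ b ∈ Finset.Icc 1 (n-1), (1:ℝ)/b - (1-p n)^b/(b:ℝ) ≤ p n := by
      intro b hb
      have hb1 : 1 ≤ b := (Finset.mem_Icc.mp hb).1
      have hb0 : (0:ℝ) < b := by exact_mod_cast hb1
      have := hbern b
      rw [div_sub_div_same, div_le_iff₀ hb0]
      have h1 : (1:ℝ) - (1-p n)^b ≤ (b:ℝ)*p n := by linarith
      calc (1:ℝ) - (1-p n)^b ≤ (b:ℝ)*p n := h1
      _ = p n * b := by ring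
    refine (Finset.sum_le_sum step).trans ?_
    rw [Finset.sum_const, Nat.card_Icc]
    have hcard : ((n-1+1-1:ℕ):ℝ) ≤ (n:ℝ) := by
      exact_mod_cast (by omega : n-1+1-1 ≤ n)
    calc ((n-1+1-1:ℕ)) • p n = ((n-1+1-1:ℕ):ℝ) * p n := nsmul_eq_mul _ _
    _ ≤ (n:ℝ) * p n := by
        apply mul_le_mul_of_nonneg_right hcard (le_of_lt hP)
  have hqn_low : 1 - (n:ℝ)*p n ≤ (1-p n)^n := hbern n
  have hqn_half : (1:ℝ)/2 ≤ (1-p n)^n := le_trans (by linarith) hqn_low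
  have hD0 : 0 < DD mu1 mun p n := by
    rw [DD]
    have h1 : 0 < mu1/mun := by positivity
    have h2 : 0 ≤ (1-p n)^n/((n:ℝ)*p n) := by
      apply div_nonneg (hqpow0 n) (by positivity)
    linarith
  have hnP0 : (0:ℝ) < (n:ℝ)*p n := by positivity
  have hiden : (n:ℝ)*p n*DD mu1 mun p n
      = (mu1/mun)*((n:ℝ)*p n) + (1-p n)^n + ((n:ℝ)*p n)*SS p n := by
    rw [DD, mul_add, mul_add]
    congr 1
    · congr 1
      · ring
      · rw [mul_div_cancel₀ _ (ne_of_gt hnP0)]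
  have hR0 : 0 < RR mu1 mun p n := by
    rw [RR]; positivity
  have hR_le : RR mu1 mun p n ≤ 2*n := by
    rw [RR]
    have hPD : 1/(2*(n:ℝ)) ≤ p n * DD mu1 mun p n := by
      have h1 : (1-p n)^n/(n:ℝ) ≤ p n * DD mu1 mun p n := by
        have expand : p n * DD mu1 mun p n
            = p n * (mu1/mun) + (1-p n)^n/(n:ℝ) + p n * SS p n := by
          rw [DD, mul_add, mul_add]
          congr 1
          congr 1
          field_simp [ne_of_gt hP, ne_of_gt hn0]
        have h2 : 0 ≤ p n * (mu1/mun) := by positivity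
        have h3 : 0 ≤ p n * SS p n := by positivity
        rw [expand]; linarith
      have h4 : 1/(2*(n:ℝ)) ≤ (1-p n)^n/(n:ℝ) := by
        rw [div_le_div_iff₀ (by positivity) hn0]
        calc (1:ℝ)*n = n := by ring
        _ ≤ (1-p n)^n * (2*n) := by nlinarith
      linarith
    rw [div_le_iff₀ (by positivity)]
    have h5 : 1/(2*(n:ℝ)) * (2*(n:ℝ)) ≤ p n * DD mu1 mun p n * (2*(n:ℝ)) := by
      apply mul_le_mul_of_nonneg_right hPD (by positivity)
    have h6 : 1/(2*(n:ℝ)) * (2*(n:ℝ)) = 1 := by field_simp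
    linarith
  exact ⟨hP, hP1, hS0, hSle, hHS, hqn_low, hqpow1 n, hD0, hiden, hR0, hR_le⟩

/- ### Basic limits -/

lemma t_log : Tendsto (fun n:ℕ => Real.log n) atTop atTop :=
  Real.tendsto_log_atTop.comp tendsto_natCast_atTop_atTop

lemma t_np {α : ℝ} (hα : 1 < α) :
    Tendsto (fun n:ℕ => (n:ℝ) * (n:ℝ)^(-α)) atTop (nhds 0) := by
  have h0 : Tendsto (fun x:ℝ => x^(-(α-1))) atTop (nhds 0) :=
    tendsto_rpow_neg_atTop (by linarith)
  have h1 : Tendsto (fun n:ℕ => ((n:ℝ))^(1-α)) atTop (nhds 0) := by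
    have := h0.comp (tendsto_natCast_atTop_atTop (R := ℝ))
    simpa only [Function.comp_def, neg_sub] using this
  apply h1.congr'
  filter_upwards [eventually_ge_atTop 1] with n hn
  have hn0 : (0:ℝ) < n := by exact_mod_cast hn
  rw [show (1-α) = 1 + (-α) by ring, Real.rpow_add hn0, Real.rpow_one]

lemma t_logdiv {α : ℝ} (hα : 1 < α) :
    Tendsto (fun n:ℕ => Real.log n * (n:ℝ)^(-α+1)) atTop (nhds 0) := by
  have h0 : Tendsto (fun x:ℝ => Real.log x / x^(α-1)) atTop (nhds 0) :=
    (isLittleO_log_rpow_atTop (by linarith)).tendsto_div_nhds_zero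
  have h1 := h0.comp (tendsto_natCast_atTop_atTop (R := ℝ))
  apply h1.congr'
  filter_upwards [eventually_ge_atTop 1] with n hn
  have hn0 : (0:ℝ) < n := by exact_mod_cast hn
  simp only [Function.comp]
  rw [div_eq_mul_inv, ← Real.rpow_neg (le_of_lt hn0), neg_sub]
  ring_nf

lemma t_nplog {α : ℝ} (hα : 1 < α) :
    Tendsto (fun n:ℕ => (n:ℝ) * (n:ℝ)^(-α) * (1 + Real.log n)) atTop (nhds 0) := by
  have h2 : Tendsto (fun n:ℕ => (n:ℝ)*(n:ℝ)^(-α) + Real.log n * (n:ℝ)^(-α+1))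
      atTop (nhds 0) := by
    simpa using (t_np hα).add (t_logdiv hα)
  apply h2.congr'
  filter_upwards [eventually_ge_atTop 1] with n hn
  have hn0 : (0:ℝ) < n := by exact_mod_cast hn
  rw [show (-α+1) = (-α) + 1 by ring, Real.rpow_add hn0, Real.rpow_one]
  ring

lemma t_qn {α : ℝ} (hα : 1 < α) :
    Tendsto (fun n:ℕ => (1 - (n:ℝ)^(-α))^n) atTop (nhds 1) := by
  have hlow : Tendsto (fun n:ℕ => 1 - (n:ℝ)*(n:ℝ)^(-α)) atTop (nhds 1) := by
    simpa using (tendsto_const_nhds (x := (1:ℝ))).sub (t_np hα)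
  refine tendsto_of_tendsto_of_tendsto_of_le_of_le' hlow tendsto_const_nhds ?_ ?_
  · filter_upwards [eventually_ge_atTop 1] with n hn
    have hn0 : (0:ℝ) < n := by exact_mod_cast hn
    have hp1 : (n:ℝ)^(-α) ≤ 1 :=
      Real.rpow_le_one_of_one_le_of_nonpos (by exact_mod_cast hn) (by linarith)
    have := one_add_mul_le_pow (a := -(n:ℝ)^(-α)) (by linarith) n
    calc 1 - (n:ℝ)*(n:ℝ)^(-α) = 1 + (n:ℝ)*(-(n:ℝ)^(-α)) := by ring
    _ ≤ (1 + -(n:ℝ)^(-α))^n := this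
    _ = (1 - (n:ℝ)^(-α))^n := by ring_nf
  · filter_upwards [eventually_ge_atTop 1] with n hn
    have hn0 : (0:ℝ) < n := by exact_mod_cast hn
    have hp0 : (0:ℝ) ≤ (n:ℝ)^(-α) := Real.rpow_nonneg (le_of_lt hn0) _
    have hp1 : (n:ℝ)^(-α) ≤ 1 :=
      Real.rpow_le_one_of_one_le_of_nonpos (by exact_mod_cast hn) (by linarith)
    exact pow_le_one₀ (by linarith) (by linarith)

lemma t_H : Tendsto (fun n:ℕ => harmonicNum (n-1) / Real.log n) atTop (nhds 1) := by
  have hup : Tendsto (fun n:ℕ => (Real.log n)⁻¹ + 1) atTop (nhds 1) := by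
    simpa using (tendsto_inv_atTop_zero.comp t_log).add (tendsto_const_nhds (x := (1:ℝ)))
  refine tendsto_of_tendsto_of_tendsto_of_le_of_le' tendsto_const_nhds hup ?_ ?_
  · filter_upwards [eventually_ge_atTop 2] with n hn
    have hn1 : 1 ≤ n := by omega
    have hL : 0 < Real.log n := Real.log_pos (by exact_mod_cast hn)
    have hlog : Real.log n ≤ harmonicNum (n-1) := by
      have := log_le_harmonicNum (n-1)
      have hc : ((n-1:ℕ):ℝ) + 1 = (n:ℝ) := by
        push_cast [Nat.cast_sub hn1]; ring
      rwa [hc] at this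
    rw [le_div_iff₀ hL, one_mul]
    exact hlog
  · filter_upwards [eventually_ge_atTop 2] with n hn
    have hn1 : 1 ≤ n := by omega
    have hL : 0 < Real.log n := Real.log_pos (by exact_mod_cast hn)
    have hup' : harmonicNum (n-1) ≤ 1 + Real.log n := H_le_log hn
    rw [div_le_iff₀ hL]
    have he : ((Real.log n)⁻¹ + 1) * Real.log n = 1 + Real.log n := by
      field_simp
    rw [he]
    exact hup'

lemma t_aux (a b : ℝ) :
    Tendsto (fun n:ℕ => (a + b*Real.log n)/(Real.log n)^2) atTop (nhds 0) := by
  have h1 : Tendsto (fun x:ℝ => (a + b*x)/x^2) atTop (nhds 0) := by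
    have h2 : Tendsto (fun x:ℝ => a/x^2 + b/x) atTop (nhds 0) := by
      have ha : Tendsto (fun x:ℝ => a/x^2) atTop (nhds 0) :=
        tendsto_const_nhds.div_atTop (tendsto_pow_atTop (by norm_num : (2:ℕ) ≠ 0))
      have hb : Tendsto (fun x:ℝ => b/x) atTop (nhds 0) :=
        tendsto_const_nhds.div_atTop tendsto_id
      simpa using ha.add hb
    apply h2.congr'
    filter_upwards [eventually_gt_atTop (0:ℝ)] with x hx
    field_simp
  have := h1.comp t_log
  simpa [Function.comp_def] using this

/- ### Convergence of the building blocks -/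

section Main

variable {mu1 mun α : ℝ} {p : ℕ → ℝ}

lemma evGood (hα : 1 < α) (hp : ∀ n : ℕ, p n = (n:ℝ)^(-α)) :
    ∀ᶠ n : ℕ in atTop, 2 ≤ n ∧ (n:ℝ)*p n ≤ 1/2 := by
  have h1 : Tendsto (fun n:ℕ => (n:ℝ)*p n) atTop (nhds 0) := by
    refine (t_np hα).congr fun n => ?_
    rw [hp n]
  filter_upwards [eventually_ge_atTop 2,
    h1.eventually_le_const (by norm_num : (0:ℝ) < 1/2)] with n h2 h3
  exact ⟨h2, h3⟩

lemma sN_pos {n : ℕ} (hn : 2 ≤ n) : 0 < sN α n := by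
  have hn0 : (0:ℝ) < n := by exact_mod_cast (by omega : 0 < n)
  have hL : 0 < Real.log n := Real.log_pos (by exact_mod_cast hn)
  have hr : 0 < (n:ℝ)^(2-α) := Real.rpow_pos_of_pos hn0 _
  rw [sN]; positivity

lemma sN_eq {n : ℕ} (hp : p n = (n:ℝ)^(-α)) (hn : 2 ≤ n) :
    sN α n = (1/2) * ((n:ℝ)^2 * p n) * (Real.log n)^2 := by
  have hn0 : (0:ℝ) < n := by exact_mod_cast (by omega : 0 < n)
  rw [sN, hp, show (2-α) = (2:ℝ)+(-α) by ring, Real.rpow_add hn0,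
    show ((2:ℝ)) = ((2:ℕ):ℝ) by norm_num, Real.rpow_natCast]

lemma t_npD (hmu1 : 0 < mu1) (hmun : 0 < mun) (hα : 1 < α)
    (hp : ∀ n : ℕ, p n = (n:ℝ)^(-α)) :
    Tendsto (fun n:ℕ => (n:ℝ)*p n*DD mu1 mun p n) atTop (nhds 1) := by
  have h1 : Tendsto (fun n:ℕ => (mu1/mun)*((n:ℝ)*p n)) atTop (nhds 0) := by
    have h0 := (t_np hα).const_mul (mu1/mun)
    rw [mul_zero] at h0
    exact h0.congr fun n => by rw [hp n]
  have h2 : Tendsto (fun n:ℕ => (1-p n)^n) atTop (nhds 1) := by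
    refine (t_qn hα).congr fun n => ?_
    rw [hp n]
  have h3 : Tendsto (fun n:ℕ => ((n:ℝ)*p n)*SS p n) atTop (nhds 0) := by
    have hup : Tendsto (fun n:ℕ => (n:ℝ)*p n*(1 + Real.log n)) atTop (nhds 0) := by
      refine (t_nplog hα).congr fun n => ?_
      rw [hp n]
    refine tendsto_of_tendsto_of_tendsto_of_le_of_le' tendsto_const_nhds hup ?_ ?_
    · filter_upwards [evGood hα hp] with n hn
      obtain ⟨hP, hP1, hS0, hSle, hHS, hqlow, hq1, hD0, hiden, hR0, hRle⟩ :=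
        facts hmu1 hmun hα (hp n) hn.1 hn.2
      have hn0 : (0:ℝ) < n := by exact_mod_cast (by omega : 0 < n)
      positivity
    · filter_upwards [evGood hα hp] with n hn
      obtain ⟨hP, hP1, hS0, hSle, hHS, hqlow, hq1, hD0, hiden, hR0, hRle⟩ :=
        facts hmu1 hmun hα (hp n) hn.1 hn.2
      have hn0 : (0:ℝ) < n := by exact_mod_cast (by omega : 0 < n)
      have hH : SS p n ≤ 1 + Real.log n := hSle.trans (H_le_log hn.1)
      have hnp0 : 0 ≤ (n:ℝ)*p n := by positivity
      exact mul_le_mul_of_nonneg_left hH hnp0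
  have hsum : Tendsto (fun n:ℕ => (mu1/mun)*((n:ℝ)*p n) + (1-p n)^n + ((n:ℝ)*p n)*SS p n)
      atTop (nhds 1) := by
    simpa using (h1.add h2).add h3
  apply hsum.congr'
  filter_upwards [evGood hα hp] with n hn
  obtain ⟨hP, hP1, hS0, hSle, hHS, hqlow, hq1, hD0, hiden, hR0, hRle⟩ :=
    facts hmu1 hmun hα (hp n) hn.1 hn.2
  exact hiden.symm

lemma t_Rn (hmu1 : 0 < mu1) (hmun : 0 < mun) (hα : 1 < α)
    (hp : ∀ n : ℕ, p n = (n:ℝ)^(-α)) :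
    Tendsto (fun n:ℕ => RR mu1 mun p n / (n:ℝ)) atTop (nhds 1) := by
  have h1 := ((t_npD hmu1 hmun hα hp).inv₀ one_ne_zero)
  rw [inv_one] at h1
  apply h1.congr'
  filter_upwards [evGood hα hp] with n hn
  obtain ⟨hP, hP1, hS0, hSle, hHS, hqlow, hq1, hD0, hiden, hR0, hRle⟩ :=
    facts hmu1 hmun hα (hp n) hn.1 hn.2
  have hn0 : (0:ℝ) < n := by exact_mod_cast (by omega : 0 < n)
  rw [RR]
  field_simp

lemma tend2 (hmu1 : 0 < mu1) (hmun : 0 < mun) (hα : 1 < α)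
    (hp : ∀ n : ℕ, p n = (n:ℝ)^(-α)) :
    Tendsto (fun n:ℕ => p n * TA p n / sN α n) atTop (nhds 0) := by
  refine tendsto_of_tendsto_of_tendsto_of_le_of_le' tendsto_const_nhds (t_aux 2 0) ?_ ?_
  · filter_upwards [evGood hα hp] with n hn
    obtain ⟨hP, hP1, hS0, hSle, hHS, hqlow, hq1, hD0, hiden, hR0, hRle⟩ :=
      facts hmu1 hmun hα (hp n) hn.1 hn.2
    have hTA : 0 ≤ TA p n := Finset.sum_nonneg fun i _ => by
      have : (0:ℝ) ≤ (1-p n)^i := pow_nonneg (by linarith) i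
      positivity
    have := sN_pos (α := α) hn.1
    positivity
  · filter_upwards [evGood hα hp] with n hn
    obtain ⟨hP, hP1, hS0, hSle, hHS, hqlow, hq1, hD0, hiden, hR0, hRle⟩ :=
      facts hmu1 hmun hα (hp n) hn.1 hn.2
    have hn0 : (0:ℝ) < n := by exact_mod_cast (by omega : 0 < n)
    have hL : 0 < Real.log n := Real.log_pos (by exact_mod_cast hn.1)
    have hs := sN_pos (α := α) hn.1
    have hTA : TA p n ≤ (n:ℝ)^2 := by
      rw [TA]
      have step : ∀ i ∈ Finset.Ico 1 n, (1-p n)^i * (i:ℝ) ≤ (n:ℝ) := by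
        intro i hi
        have hi2 : i < n := (Finset.mem_Ico.mp hi).2
        have hi0 : (0:ℝ) ≤ i := by positivity
        have hq : (1-p n)^i ≤ 1 := pow_le_one₀ (by linarith) (by linarith)
        have : (1-p n)^i * (i:ℝ) ≤ 1 * (i:ℝ) := mul_le_mul_of_nonneg_right hq hi0
        have hin : (i:ℝ) ≤ n := by exact_mod_cast le_of_lt hi2
        linarith
      refine (Finset.sum_le_card_nsmul _ _ _ step).trans ?_
      rw [Nat.card_Ico, nsmul_eq_mul]
      have h1 : ((n-1:ℕ):ℝ) ≤ (n:ℝ) := by exact_mod_cast Nat.sub_le n 1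
      nlinarith
    have hnum : p n * TA p n ≤ p n * (n:ℝ)^2 := by
      exact mul_le_mul_of_nonneg_left hTA (le_of_lt hP)
    have heq : p n * (n:ℝ)^2 / sN α n = (2 + 0*Real.log n)/(Real.log n)^2 := by
      rw [sN_eq (hp n) hn.1]
      field_simp
      ring
    calc p n * TA p n / sN α n ≤ p n * (n:ℝ)^2 / sN α n := by gcongr
    _ = (2 + 0*Real.log n)/(Real.log n)^2 := heq

lemma tend3 (hmu1 : 0 < mu1) (hmun : 0 < mun) (hα : 1 < α)
    (hp : ∀ n : ℕ, p n = (n:ℝ)^(-α)) :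
    Tendsto (fun n:ℕ => p n * RR mu1 mun p n * TB p n / sN α n) atTop (nhds 0) := by
  refine tendsto_of_tendsto_of_tendsto_of_le_of_le' tendsto_const_nhds (t_aux 4 4) ?_ ?_
  · filter_upwards [evGood hα hp] with n hn
    obtain ⟨hP, hP1, hS0, hSle, hHS, hqlow, hq1, hD0, hiden, hR0, hRle⟩ :=
      facts hmu1 hmun hα (hp n) hn.1 hn.2
    have hTB : 0 ≤ TB p n := Finset.sum_nonneg fun i _ => by
      have h1 : (0:ℝ) ≤ (1-p n)^i := pow_nonneg (by linarith) i
      have h2 := harmonicNum_nonneg i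
      positivity
    have := sN_pos (α := α) hn.1
    positivity
  · filter_upwards [evGood hα hp] with n hn
    obtain ⟨hP, hP1, hS0, hSle, hHS, hqlow, hq1, hD0, hiden, hR0, hRle⟩ :=
      facts hmu1 hmun hα (hp n) hn.1 hn.2
    have hn0 : (0:ℝ) < n := by exact_mod_cast (by omega : 0 < n)
    have hL : 0 < Real.log n := Real.log_pos (by exact_mod_cast hn.1)
    have hs := sN_pos (α := α) hn.1
    have hHL : harmonicNum (n-1) ≤ 1 + Real.log n := H_le_log hn.1
    have hTB : TB p n ≤ (n:ℝ) * (1 + Real.log n) := by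
      rw [TB]
      have step : ∀ i ∈ Finset.Ico 1 n, (1-p n)^i * harmonicNum i ≤ 1 + Real.log n := by
        intro i hi
        have hi2 : i < n := (Finset.mem_Ico.mp hi).2
        have hq : (1-p n)^i ≤ 1 := pow_le_one₀ (by linarith) (by linarith)
        have hH0 := harmonicNum_nonneg i
        have hHm : harmonicNum i ≤ harmonicNum (n-1) := harmonicNum_mono (by omega)
        nlinarith
      refine (Finset.sum_le_card_nsmul _ _ _ step).trans ?_
      rw [Nat.card_Ico, nsmul_eq_mul]
      have h1 : ((n-1:ℕ):ℝ) ≤ (n:ℝ) := by exact_mod_cast Nat.sub_le n 1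
      have h2 : (0:ℝ) ≤ 1 + Real.log n := by linarith
      nlinarith
    have hTB0 : 0 ≤ TB p n := Finset.sum_nonneg fun i _ => by
      have h1 : (0:ℝ) ≤ (1-p n)^i := pow_nonneg (by linarith) i
      have h2 := harmonicNum_nonneg i
      positivity
    have hnum : p n * RR mu1 mun p n * TB p n ≤ p n * (2*(n:ℝ)) * ((n:ℝ)*(1 + Real.log n)) := by
      have e1 : p n * RR mu1 mun p n * TB p n ≤ p n * (2*(n:ℝ)) * TB p n := by
        have := mul_le_mul_of_nonneg_left hRle (le_of_lt hP)
        exact mul_le_mul_of_nonneg_right this hTB0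
      refine e1.trans ?_
      have h2 : 0 ≤ p n * (2*(n:ℝ)) := by positivity
      exact mul_le_mul_of_nonneg_left hTB h2
    have heq : p n * (2*(n:ℝ)) * ((n:ℝ)*(1 + Real.log n)) / sN α n
        = (4 + 4*Real.log n)/(Real.log n)^2 := by
      rw [sN_eq (hp n) hn.1]
      field_simp
      ring
    calc p n * RR mu1 mun p n * TB p n / sN α n
        ≤ p n * (2*(n:ℝ)) * ((n:ℝ)*(1 + Real.log n)) / sN α n := by gcongr
    _ = (4 + 4*Real.log n)/(Real.log n)^2 := heq

lemma tend4 (hmu1 : 0 < mu1) (hmun : 0 < mun) (hα : 1 < α)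
    (hp : ∀ n : ℕ, p n = (n:ℝ)^(-α)) :
    Tendsto (fun n:ℕ => p n * RR mu1 mun p n * TC p n / sN α n) atTop (nhds 0) := by
  refine tendsto_of_tendsto_of_tendsto_of_le_of_le' tendsto_const_nhds (t_aux 4 0) ?_ ?_
  · filter_upwards [evGood hα hp] with n hn
    obtain ⟨hP, hP1, hS0, hSle, hHS, hqlow, hq1, hD0, hiden, hR0, hRle⟩ :=
      facts hmu1 hmun hα (hp n) hn.1 hn.2
    have hTC : 0 ≤ TC p n := Finset.sum_nonneg fun i _ =>
      pow_nonneg (by linarith) i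
    have := sN_pos (α := α) hn.1
    positivity
  · filter_upwards [evGood hα hp] with n hn
    obtain ⟨hP, hP1, hS0, hSle, hHS, hqlow, hq1, hD0, hiden, hR0, hRle⟩ :=
      facts hmu1 hmun hα (hp n) hn.1 hn.2
    have hn0 : (0:ℝ) < n := by exact_mod_cast (by omega : 0 < n)
    have hL : 0 < Real.log n := Real.log_pos (by exact_mod_cast hn.1)
    have hs := sN_pos (α := α) hn.1
    have hTC : TC p n ≤ (n:ℝ) := by
      rw [TC]
      have step : ∀ i ∈ Finset.Ico 1 n, (1-p n)^i ≤ (1:ℝ) := fun i _ =>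
        pow_le_one₀ (by linarith) (by linarith)
      refine (Finset.sum_le_card_nsmul _ _ _ step).trans ?_
      rw [Nat.card_Ico, nsmul_eq_mul, mul_one]
      exact_mod_cast Nat.sub_le n 1
    have hTC0 : 0 ≤ TC p n := Finset.sum_nonneg fun i _ =>
      pow_nonneg (by linarith) i
    have hnum : p n * RR mu1 mun p n * TC p n ≤ p n * (2*(n:ℝ)) * (n:ℝ) := by
      have e1 : p n * RR mu1 mun p n * TC p n ≤ p n * (2*(n:ℝ)) * TC p n := by
        have := mul_le_mul_of_nonneg_left hRle (le_of_lt hP)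
        exact mul_le_mul_of_nonneg_right this hTC0
      refine e1.trans ?_
      exact mul_le_mul_of_nonneg_left hTC (by positivity)
    have heq : p n * (2*(n:ℝ)) * (n:ℝ) / sN α n = (4 + 0*Real.log n)/(Real.log n)^2 := by
      rw [sN_eq (hp n) hn.1]
      field_simp
      ring
    calc p n * RR mu1 mun p n * TC p n / sN α n
        ≤ p n * (2*(n:ℝ)) * (n:ℝ) / sN α n := by gcongr
    _ = (4 + 0*Real.log n)/(Real.log n)^2 := heq

lemma t_G : Tendsto (fun n:ℕ =>
    (harmonicNum (n-1)^2 + ∑ i ∈ Finset.Icc 1 (n-1), (1:ℝ)/(i:ℝ)^2)/(Real.log n)^2)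
    atTop (nhds 1) := by
  have h1 : Tendsto (fun n:ℕ => (harmonicNum (n-1)/Real.log n)^2) atTop (nhds 1) := by
    have := t_H.mul t_H
    rw [mul_one] at this
    exact this.congr fun n => by rw [sq]
  have h2 : Tendsto (fun n:ℕ =>
      (∑ i ∈ Finset.Icc 1 (n-1), (1:ℝ)/(i:ℝ)^2)/(Real.log n)^2) atTop (nhds 0) := by
    refine tendsto_of_tendsto_of_tendsto_of_le_of_le' tendsto_const_nhds (t_aux 2 0) ?_ ?_
    · filter_upwards [eventually_ge_atTop 2] with n hn
      have hL : 0 < Real.log n := Real.log_pos (by exact_mod_cast hn)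
      have := sq_sum_nonneg (n-1)
      positivity
    · filter_upwards [eventually_ge_atTop 2] with n hn
      have hL : 0 < Real.log n := Real.log_pos (by exact_mod_cast hn)
      have h3 := sq_sum_le (n-1)
      rw [zero_mul, add_zero]
      gcongr
  have := h1.add h2
  rw [add_zero] at this
  apply this.congr'
  filter_upwards [eventually_ge_atTop 2] with n hn
  have hL : 0 < Real.log n := Real.log_pos (by exact_mod_cast hn)
  rw [div_pow, ← add_div]

lemma t_2TD (hmu1 : 0 < mu1) (hmun : 0 < mun) (hα : 1 < α)
    (hp : ∀ n : ℕ, p n = (n:ℝ)^(-α)) :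
    Tendsto (fun n:ℕ => 2 * TD p n / (Real.log n)^2) atTop (nhds 1) := by
  have hqn : Tendsto (fun n:ℕ => (1-p n)^n) atTop (nhds 1) :=
    (t_qn hα).congr fun n => by rw [hp n]
  have hlow : Tendsto (fun n:ℕ => (1-p n)^n *
      ((harmonicNum (n-1)^2 + ∑ i ∈ Finset.Icc 1 (n-1), (1:ℝ)/(i:ℝ)^2)/(Real.log n)^2))
      atTop (nhds 1) := by
    have := hqn.mul t_G
    rwa [mul_one] at this
  refine tendsto_of_tendsto_of_tendsto_of_le_of_le' hlow t_G ?_ ?_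
  · filter_upwards [evGood hα hp] with n hn
    obtain ⟨hP, hP1, hS0, hSle, hHS, hqlow, hq1, hD0, hiden, hR0, hRle⟩ :=
      facts hmu1 hmun hα (hp n) hn.1 hn.2
    have hL : 0 < Real.log n := Real.log_pos (by exact_mod_cast hn.1)
    have hIcc := Ico_eq_Icc (by omega : 1 ≤ n)
    have hU := sum_harm_div (n-1)
    have hq0 : (0:ℝ) ≤ 1 - p n := by linarith
    have hkey : (1-p n)^n * ∑ i ∈ Finset.Icc 1 (n-1), harmonicNum i / i ≤ TD p n := by
      rw [TD, hIcc, Finset.mul_sum]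
      refine Finset.sum_le_sum fun i hi => ?_
      have hi1 : 1 ≤ i := (Finset.mem_Icc.mp hi).1
      have hi2 : i ≤ n - 1 := (Finset.mem_Icc.mp hi).2
      have hi0 : (0:ℝ) < i := by exact_mod_cast hi1
      have hqq : (1-p n)^n ≤ (1-p n)^i :=
        pow_le_pow_of_le_one hq0 (by linarith) (by omega)
      have hHn : 0 ≤ harmonicNum i / i := by
        have := harmonicNum_nonneg i; positivity
      calc (1-p n)^n * (harmonicNum i / i) ≤ (1-p n)^i * (harmonicNum i / i) :=
            mul_le_mul_of_nonneg_right hqq hHn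
      _ = (1-p n)^i * harmonicNum i / i := by rw [mul_div_assoc]
    calc (1-p n)^n *
        ((harmonicNum (n-1)^2 + ∑ i ∈ Finset.Icc 1 (n-1), (1:ℝ)/(i:ℝ)^2)/(Real.log n)^2)
        = 2 * ((1-p n)^n * ∑ i ∈ Finset.Icc 1 (n-1), harmonicNum i / i) / (Real.log n)^2 := by
          rw [hU]; field_simp
    _ ≤ 2 * TD p n / (Real.log n)^2 := by gcongr
  · filter_upwards [evGood hα hp] with n hn
    obtain ⟨hP, hP1, hS0, hSle, hHS, hqlow, hq1, hD0, hiden, hR0, hRle⟩ :=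
      facts hmu1 hmun hα (hp n) hn.1 hn.2
    have hL : 0 < Real.log n := Real.log_pos (by exact_mod_cast hn.1)
    have hIcc := Ico_eq_Icc (by omega : 1 ≤ n)
    have hU := sum_harm_div (n-1)
    have hq0 : (0:ℝ) ≤ 1 - p n := by linarith
    have hkey : TD p n ≤ ∑ i ∈ Finset.Icc 1 (n-1), harmonicNum i / i := by
      rw [TD, hIcc]
      refine Finset.sum_le_sum fun i hi => ?_
      have hi1 : 1 ≤ i := (Finset.mem_Icc.mp hi).1
      have hi0 : (0:ℝ) < i := by exact_mod_cast hi1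
      have hqq : (1-p n)^i ≤ 1 := pow_le_one₀ hq0 (by linarith)
      have hH0 := harmonicNum_nonneg i
      rw [mul_div_assoc]
      have hHn : 0 ≤ harmonicNum i / i := by positivity
      calc (1-p n)^i * (harmonicNum i / i) ≤ 1 * (harmonicNum i / i) :=
            mul_le_mul_of_nonneg_right hqq hHn
      _ = harmonicNum i / i := one_mul _
    calc 2 * TD p n / (Real.log n)^2
        ≤ 2 * (∑ i ∈ Finset.Icc 1 (n-1), harmonicNum i / i) / (Real.log n)^2 := by gcongr
    _ = (harmonicNum (n-1)^2 + ∑ i ∈ Finset.Icc 1 (n-1), (1:ℝ)/(i:ℝ)^2)/(Real.log n)^2 := by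
          rw [hU]; field_simp

lemma tend5 (hmu1 : 0 < mu1) (hmun : 0 < mun) (hα : 1 < α)
    (hp : ∀ n : ℕ, p n = (n:ℝ)^(-α)) :
    Tendsto (fun n:ℕ => p n * (RR mu1 mun p n)^2 * TD p n / sN α n) atTop (nhds 1) := by
  have h1 : Tendsto (fun n:ℕ => (RR mu1 mun p n/(n:ℝ))^2 * (2 * TD p n / (Real.log n)^2))
      atTop (nhds 1) := by
    have ha := t_Rn hmu1 hmun hα hp
    have hb := (ha.mul ha)
    rw [mul_one] at hb
    have hsq : Tendsto (fun n:ℕ => (RR mu1 mun p n/(n:ℝ))^2) atTop (nhds 1) :=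
      hb.congr fun n => by rw [sq]
    have := hsq.mul (t_2TD hmu1 hmun hα hp)
    rwa [mul_one] at this
  apply h1.congr'
  filter_upwards [evGood hα hp] with n hn
  obtain ⟨hP, hP1, hS0, hSle, hHS, hqlow, hq1, hD0, hiden, hR0, hRle⟩ :=
    facts hmu1 hmun hα (hp n) hn.1 hn.2
  have hn0 : (0:ℝ) < n := by exact_mod_cast (by omega : 0 < n)
  have hL : 0 < Real.log n := Real.log_pos (by exact_mod_cast hn.1)
  rw [sN_eq (hp n) hn.1]
  field_simp

set_option maxHeartbeats 1000000 in
lemma tend1 (hmu1 : 0 < mu1) (hmun : 0 < mun) (hα : 1 < α)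
    (hp : ∀ n : ℕ, p n = (n:ℝ)^(-α)) :
    Tendsto (fun n:ℕ => T1 mu1 mun p n / sN α n) atTop (nhds 0) := by
  have hc0 : 0 < mu1/mun := by positivity
  set c : ℝ := mu1/mun with hc
  clear_value c
  refine squeeze_zero_norm' ?_ (t_aux (4*(2*c+5)*(c+2)) (4*(2*c+5)))
  filter_upwards [evGood hα hp] with n hn
  obtain ⟨hP, hP1, hS0, hSle, hHS, hqlow, hq1, hD0, hiden, hR0, hRle⟩ :=
    facts hmu1 hmun hα (hp n) hn.1 hn.2
  have hn0 : (0:ℝ) < n := by exact_mod_cast (by omega : 0 < n)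
  have hn1 : (1:ℝ) ≤ n := by exact_mod_cast (by omega : 1 ≤ n)
  have hL : 0 < Real.log n := Real.log_pos (by exact_mod_cast hn.1)
  have hs := sN_pos (α := α) hn.1
  have hT1eq : T1 mu1 mun p n = (1 - p n)^n * (1 - RR mu1 mun p n/(n:ℝ)) *
      ((n:ℝ) - 1 + 1/p n - RR mu1 mun p n * harmonicNum (n-1)
        - RR mu1 mun p n/((n:ℝ) * p n)) := by rw [T1]
  have hsEq : sN α n = (1/2) * ((n:ℝ)^2 * p n) * (Real.log n)^2 := sN_eq (hp n) hn.1
  have hSS0 : 0 ≤ SS p n := hS0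
  set S : ℝ := SS p n with hSdef
  set P : ℝ := p n with hPdef
  set D : ℝ := DD mu1 mun p n with hDdef
  set R : ℝ := RR mu1 mun p n with hRdef
  set H : ℝ := harmonicNum (n-1) with hHdef
  have hDD : D = c + (1-P)^n/((n:ℝ)*P) + S := by rw [hDdef, DD, ← hc, ← hPdef, ← hSdef]
  have hRR : R = 1/(P * D) := by rw [hRdef, RR, ← hPdef, ← hDdef]
  clear_value S P D R H
  set q : ℝ := (1 - P)^n with hqdef
  clear_value q
  have hH0 : 0 ≤ H := by rw [hHdef]; exact harmonicNum_nonneg (n-1)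
  have hHL : H ≤ 1 + Real.log n := by rw [hHdef]; exact H_le_log hn.1
  have hnP0 : 0 < (n:ℝ)*P := mul_pos hn0 hP
  have hnP : (n:ℝ)*P ≤ 1/2 := hn.2
  have hPD0 : 0 < P * D := mul_pos hP hD0
  have h1 : R * (P * D) = 1 := by
    rw [hRR, one_div, inv_mul_cancel₀ (ne_of_gt hPD0)]
  have hRD : R * D = 1/P := by
    rw [eq_div_iff (ne_of_gt hP)]
    linear_combination h1
  have hB : (n:ℝ) - 1 + 1/P - R*H - R/((n:ℝ)*P)
      = (n:ℝ) - 1 + R*(c + (q - 1)/((n:ℝ)*P) + (S - H)) := by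
    rw [hDD] at hRD
    linear_combination -hRD
  have hqn1 : |q - 1| ≤ (n:ℝ)*P := by
    rw [abs_le]; exact ⟨by linarith, by linarith⟩
  have hE : |c + (q - 1)/((n:ℝ)*P) + (S - H)| ≤ c + 2 := by
    have e1 : |(q - 1)/((n:ℝ)*P)| ≤ 1 := by
      rw [abs_div, abs_of_pos hnP0, div_le_one hnP0]
      exact hqn1
    have e2 : |S - H| ≤ 1 := by
      rw [abs_le]; exact ⟨by linarith, by linarith⟩
    have e1' := abs_le.mp e1
    have e2' := abs_le.mp e2
    rw [abs_le]; exact ⟨by linarith, by linarith⟩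
  have hBabs : |(n:ℝ) - 1 + R*(c + (q - 1)/((n:ℝ)*P) + (S - H))| ≤ (n:ℝ)*(2*c+5) := by
    have h2 : |R*(c + (q - 1)/((n:ℝ)*P) + (S - H))| ≤ 2*(n:ℝ)*(c+2) := by
      rw [abs_mul, abs_of_pos hR0]
      calc R * |c + (q - 1)/((n:ℝ)*P) + (S - H)| ≤ (2*(n:ℝ)) * (c+2) :=
            mul_le_mul hRle hE (abs_nonneg _) (by linarith)
      _ = 2*(n:ℝ)*(c+2) := by ring
    have h3 := (abs_add_le ((n:ℝ) - 1) (R*(c + (q - 1)/((n:ℝ)*P) + (S - H)))).trans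
      (add_le_add (le_of_eq (abs_of_nonneg (by linarith))) h2)
    refine h3.trans ?_
    have hexp : (n:ℝ)*(2*c+5) - ((n:ℝ) - 1 + 2*(n:ℝ)*(c+2)) = 1 := by ring
    linarith
  have hXne : (n:ℝ)*P*D ≠ 0 := ne_of_gt (mul_pos hnP0 hD0)
  have hfrac_id : 1 - R/(n:ℝ) = ((n:ℝ)*P*D - 1)/((n:ℝ)*P*D) := by
    have hRn : R/(n:ℝ) = 1/((n:ℝ)*P*D) := by
      rw [hRR, div_div]
      congr 1
      ring
    rw [hRn, eq_div_iff hXne, sub_mul, one_mul, one_div, inv_mul_cancel₀ hXne]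
  have hiden' : (n:ℝ)*P*D = c*((n:ℝ)*P) + q + ((n:ℝ)*P)*S := by
    rw [hiden, ← hc]; try ring
  have hcnP : 0 ≤ c*((n:ℝ)*P) := mul_nonneg (le_of_lt hc0) (le_of_lt hnP0)
  have hnPS : 0 ≤ ((n:ℝ)*P)*S := mul_nonneg (le_of_lt hnP0) hSS0
  have hDen : 1/2 ≤ (n:ℝ)*P*D := by
    rw [hiden']
    have h5 : 1/2 ≤ q := by linarith
    linarith
  have hNum : |(n:ℝ)*P*D - 1| ≤ ((n:ℝ)*P)*(c + 1 + H) := by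
    rw [hiden']
    have h6 : ((n:ℝ)*P)*S ≤ ((n:ℝ)*P)*H := mul_le_mul_of_nonneg_left hSle (le_of_lt hnP0)
    have h6' : 0 ≤ ((n:ℝ)*P)*H := mul_nonneg (le_of_lt hnP0) hH0
    have hexp : ((n:ℝ)*P)*(c + 1 + H) = c*((n:ℝ)*P) + (n:ℝ)*P + ((n:ℝ)*P)*H := by ring
    rw [abs_le]
    constructor
    · linarith
    · linarith
  have hfrac : |1 - R/(n:ℝ)| ≤ 2*((n:ℝ)*P)*(c + 1 + H) := by
    rw [hfrac_id, abs_div, abs_of_pos (by linarith : (0:ℝ) < (n:ℝ)*P*D)]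
    rw [div_le_iff₀ (by linarith : (0:ℝ) < (n:ℝ)*P*D)]
    have h9 : 0 ≤ ((n:ℝ)*P)*(c + 1 + H) := mul_nonneg (le_of_lt hnP0) (by linarith)
    have h10 : 0 ≤ ((n:ℝ)*P)*(c + 1 + H) * (2*((n:ℝ)*P*D) - 1) :=
      mul_nonneg h9 (by linarith)
    have hexp2 : 2*((n:ℝ)*P)*(c + 1 + H) * ((n:ℝ)*P*D)
        = ((n:ℝ)*P)*(c + 1 + H) * (2*((n:ℝ)*P*D) - 1) + ((n:ℝ)*P)*(c + 1 + H) := by ring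
    linarith
  have hq_abs : |q| ≤ 1 := by
    rw [abs_of_nonneg (by linarith : (0:ℝ) ≤ q)]
    exact hq1
  have hbnd1 : 0 ≤ 2*((n:ℝ)*P)*(c + 1 + H) :=
    mul_nonneg (by linarith) (by linarith)
  have hbnd2 : 0 ≤ (n:ℝ)*(2*c+5) := mul_nonneg (le_of_lt hn0) (by linarith)
  have hT1abs : |T1 mu1 mun p n| ≤ 2*((n:ℝ)*P)*(c + 1 + H) * ((n:ℝ)*(2*c+5)) := by
    have hform : T1 mu1 mun p n = q * (1 - R/(n:ℝ)) *
        ((n:ℝ) - 1 + R*(c + (q - 1)/((n:ℝ)*P) + (S - H))) := by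
      rw [hT1eq, hB]
    rw [hform, abs_mul, abs_mul]
    calc |q| * |1 - R/(n:ℝ)| * |(n:ℝ) - 1 + R*(c + (q - 1)/((n:ℝ)*P) + (S - H))|
        ≤ 1 * (2*((n:ℝ)*P)*(c + 1 + H)) * ((n:ℝ)*(2*c+5)) := by
          apply mul_le_mul _ hBabs (abs_nonneg _) (by linarith)
          exact mul_le_mul hq_abs hfrac (abs_nonneg _) zero_le_one
    _ = 2*((n:ℝ)*P)*(c + 1 + H) * ((n:ℝ)*(2*c+5)) := by ring
  have hnorm : ‖T1 mu1 mun p n / sN α n‖ = |T1 mu1 mun p n| / sN α n := by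
    rw [Real.norm_eq_abs, abs_div, abs_of_pos hs]
  rw [hnorm]
  have heq : 2*((n:ℝ)*P)*(c + 1 + H) * ((n:ℝ)*(2*c+5)) / sN α n
      = 4*(2*c+5)*(c + 1 + H)/(Real.log n)^2 := by
    rw [hsEq]
    field_simp
    ring
  calc |T1 mu1 mun p n| / sN α n
      ≤ 2*((n:ℝ)*P)*(c + 1 + H) * ((n:ℝ)*(2*c+5)) / sN α n := by gcongr
  _ = 4*(2*c+5)*(c + 1 + H)/(Real.log n)^2 := heq
  _ ≤ (4*(2*c+5)*(c+2) + 4*(2*c+5)*Real.log n)/(Real.log n)^2 := by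
      gcongr
      have h11 : 0 ≤ 4*(2*c+5) * (1 + Real.log n - H) :=
        mul_nonneg (by linarith) (by linarith)
      have hexp3 : 4*(2*c+5)*(c+2) + 4*(2*c+5)*Real.log n - 4*(2*c+5)*(c + 1 + H)
          = 4*(2*c+5) * (1 + Real.log n - H) := by ring
      linarith

end Main


end S19


theorem stmt_19 (mu1 mun α : ℝ) (hmu1 : 0 < mu1) (hmun : 0 < mun) (hα : 1 < α)
    (p : ℕ → ℝ) (hp : ∀ n : ℕ, p n = (n : ℝ) ^ (-α)) :
    Filter.Tendsto
      (fun n : ℕ =>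
        EDelta mu1 mun p n / ((1 / 2) * (n : ℝ) ^ (2 - α) * (Real.log n) ^ 2))
      Filter.atTop (nhds 1) := by
  have hmu1' : mu1 ≠ 0 := ne_of_gt hmu1
  have hsplit : ∀ a b c d e s : ℝ, (a + (b - c - d + e))/s
      = a/s + (b/s - c/s - d/s + e/s) := by
    intro a b c d e s
    rw [add_div, add_div, sub_div, sub_div]
  have hfun : ∀ n : ℕ, EDelta mu1 mun p n / ((1/2)*(n:ℝ)^(2-α)*(Real.log n)^2)
      = S19.T1 mu1 mun p n / S19.sN α n
        + (p n * S19.TA p n / S19.sN α n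
          - p n * S19.RR mu1 mun p n * S19.TB p n / S19.sN α n
          - p n * S19.RR mu1 mun p n * S19.TC p n / S19.sN α n
          + p n * (S19.RR mu1 mun p n)^2 * S19.TD p n / S19.sN α n) := by
    intro n
    have hsn : (1/2)*(n:ℝ)^(2-α)*(Real.log n)^2 = S19.sN α n := rfl
    rw [hsn, S19.EDelta_eq mu1 mun hmu1' p n, hsplit]
  have h := (S19.tend1 hmu1 hmun hα hp).add
    ((((S19.tend2 hmu1 hmun hα hp).sub (S19.tend3 hmu1 hmun hα hp)).sub
      (S19.tend4 hmu1 hmun hα hp)).add (S19.tend5 hmu1 hmun hα hp))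
  rw [show (0:ℝ) + (0 - 0 - 0 + 1) = 1 by norm_num] at h
  exact h.congr fun n => (hfun n).symm
end
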